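/- arXiv:2504.09003 — 6 statements merged into one kernel-verified Lean document; each statement's English description precedes it below -/
import Mathlib

section
/- Every maximal commuting family of a finite set L with |L| > 1 has exactly |L| - 1 elements. -/
/-!
A maximal commuting family `F` of `L` (with `|L| > 1`) contains `L`, and it is a binary tree:
let `C` be a largest set among the proper members of `F` and the singletons of `L`. Every proper
member of `F` lies inside `C` or inside `L \ C`, and by maximality each of `C` and `L \ C` is a
member of `F` or has at most one element. Restricting `F` to `C` and to `L \ C` gives maximal
families there, so by induction `|F| = 1 + (|C| - 1) + (|L \ C| - 1) = |L| - 1`.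
-/

open Finset

/-- A commuting family of subsets of `L`. -/
def IsCommFamOn {α : Type*} [DecidableEq α] (L : Finset α) (F : Finset (Finset α)) : Prop :=
  (∀ I ∈ F, I ⊆ L) ∧ (∀ I ∈ F, 1 < I.card) ∧
    ∀ I ∈ F, ∀ J ∈ F, I ≠ J → Disjoint I J ∨ I ⊂ J ∨ J ⊂ I

/-- A maximal commuting family of `L`. -/
def IsMaxCommFamOn {α : Type*} [DecidableEq α] (L : Finset α) (F : Finset (Finset α)) : Prop :=
  IsCommFamOn L F ∧ ∀ G, IsCommFamOn L G → F ⊆ G → G = F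

namespace Finset

variable {α : Type*} {I J K : Finset α}

/-- Reflexive form of the relation required in `IsCommFamOn` (see `commutes_iff_of_ne`). -/
def Commutes (I J : Finset α) : Prop :=
  Disjoint I J ∨ I ⊆ J ∨ J ⊆ I

theorem commutes_iff_of_ne (h : I ≠ J) : Commutes I J ↔ Disjoint I J ∨ I ⊂ J ∨ J ⊂ I := by
  simp only [Commutes, ssubset_iff_subset_ne, h, Ne.symm h, ne_eq, not_false_eq_true, and_true]

theorem Commutes.symm (h : Commutes I J) : Commutes J I := by
  rcases h with h | h | h
  exacts [Or.inl h.symm, Or.inr (Or.inr h), Or.inr (Or.inl h)]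

theorem Commutes.of_subset_left (h : Commutes I K) (hJI : J ⊆ I) (hKI : ¬ K ⊆ I) :
    Commutes J K := by
  rcases h with h | h | h
  · exact Or.inl (h.mono_left hJI)
  · exact Or.inr (Or.inl (hJI.trans h))
  · exact absurd h hKI

theorem commutes_singleton_left (a : α) (J : Finset α) : Commutes {a} J := by
  by_cases ha : a ∈ J
  · exact Or.inr (Or.inl (singleton_subset_iff.mpr ha))
  · exact Or.inl (disjoint_singleton_left.mpr ha)

end Finset

section CommFam

variable {α : Type*} [DecidableEq α] {L C I J : Finset α} {F G : Finset (Finset α)}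

theorem isCommFamOn_iff : IsCommFamOn L F ↔
    (∀ I ∈ F, I ⊆ L) ∧ (∀ I ∈ F, 1 < I.card) ∧ ∀ I ∈ F, ∀ J ∈ F, Commutes I J := by
  refine and_congr_right' (and_congr_right' (forall₂_congr fun I _ => forall₂_congr fun J _ => ?_))
  by_cases h : I = J
  · simp only [h, ne_eq, not_true_eq_false, IsEmpty.forall_iff, true_iff]
    exact Or.inr (Or.inl subset_rfl)
  · simp only [commutes_iff_of_ne h, ne_eq, h, not_false_eq_true, forall_const]

theorem IsCommFamOn.subset (hF : IsCommFamOn L F) (hI : I ∈ F) : I ⊆ L := hF.1 I hI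

theorem IsCommFamOn.one_lt_card (hF : IsCommFamOn L F) (hI : I ∈ F) : 1 < I.card := hF.2.1 I hI

theorem IsCommFamOn.commutes (hF : IsCommFamOn L F) (hI : I ∈ F) (hJ : J ∈ F) : Commutes I J :=
  (isCommFamOn_iff.mp hF).2.2 I hI J hJ

theorem IsCommFamOn.mono (hF : IsCommFamOn C F) (hCL : C ⊆ L) : IsCommFamOn L F :=
  ⟨fun _ hI => (hF.subset hI).trans hCL, hF.2⟩

theorem IsCommFamOn.eq_empty_of_card_le_one (hF : IsCommFamOn L F) (hL : L.card ≤ 1) : F = ∅ :=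
  eq_empty_of_forall_notMem fun _ hI =>
    (card_le_card (hF.subset hI)).not_gt (hL.trans_lt (hF.one_lt_card hI))

theorem IsCommFamOn.union (hF : IsCommFamOn L F) (hG : IsCommFamOn L G)
    (hFG : ∀ I ∈ F, ∀ J ∈ G, Commutes I J) : IsCommFamOn L (F ∪ G) := by
  refine isCommFamOn_iff.mpr ⟨?_, ?_, ?_⟩
  · simp only [mem_union]
    rintro I (hI | hI)
    exacts [hF.subset hI, hG.subset hI]
  · simp only [mem_union]
    rintro I (hI | hI)
    exacts [hF.one_lt_card hI, hG.one_lt_card hI]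
  · simp only [mem_union]
    rintro I (hI | hI) J (hJ | hJ)
    exacts [hF.commutes hI hJ, hFG I hI J hJ, (hFG J hJ I hI).symm, hG.commutes hI hJ]

theorem IsCommFamOn.insert_of_commutes (hF : IsCommFamOn L F) (hJL : J ⊆ L) (hJ : 1 < J.card)
    (hJF : ∀ I ∈ F, Commutes I J) : IsCommFamOn L (insert J F) := by
  have hJ : IsCommFamOn L {J} := isCommFamOn_iff.mpr
    ⟨by simpa using hJL, by simpa using hJ, by simp [Commutes]⟩
  rw [insert_eq, union_comm]
  exact hF.union hJ (by simpa using hJF)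

theorem IsCommFamOn.filter_subset (hF : IsCommFamOn L F) (C : Finset α) :
    IsCommFamOn C (F.filter (· ⊆ C)) := by
  refine isCommFamOn_iff.mpr ⟨fun I hI => (mem_filter.mp hI).2, fun I hI => ?_, fun I hI J hJ => ?_⟩
  · exact hF.one_lt_card (mem_filter.mp hI).1
  · exact hF.commutes (mem_filter.mp hI).1 (mem_filter.mp hJ).1

theorem IsMaxCommFamOn.mem_of_commutes (hF : IsMaxCommFamOn L F) (hJL : J ⊆ L)
    (hJ : 1 < J.card) (hJF : ∀ I ∈ F, Commutes I J) : J ∈ F := by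
  rw [← hF.2 _ (hF.1.insert_of_commutes hJL hJ hJF) (subset_insert J F)]
  exact mem_insert_self J F

theorem IsMaxCommFamOn.self_mem (hF : IsMaxCommFamOn L F) (hL : 1 < L.card) : L ∈ F :=
  hF.mem_of_commutes subset_rfl hL fun _ hI => Or.inr (Or.inl (hF.1.subset hI))

/-- A member `C` of a maximal family carries a maximal family: anything added inside `C` would
commute with the members of `F` not inside `C`, since those contain `C` or are disjoint from it. -/
theorem IsMaxCommFamOn.filter_subset (hF : IsMaxCommFamOn L F) (hC : C ∈ F) :
    IsMaxCommFamOn C (F.filter (· ⊆ C)) := by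
  refine ⟨hF.1.filter_subset C, fun G hG hFG => ?_⟩
  have hcomm : ∀ I ∈ F, ∀ J ∈ G, Commutes I J := by
    intro I hI J hJ
    by_cases hIC : I ⊆ C
    · exact hG.commutes (hFG (mem_filter.mpr ⟨hI, hIC⟩)) hJ
    · exact ((hF.1.commutes hC hI).of_subset_left (hG.subset hJ) hIC).symm
  have hGF : G ⊆ F := by
    rw [← hF.2 _ (hF.1.union (hG.mono (hF.1.subset hC)) hcomm) subset_union_left]
    exact subset_union_right
  exact Subset.antisymm (fun J hJ => mem_filter.mpr ⟨hGF hJ, hG.subset hJ⟩) hFG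

end CommFam

section Split

variable {α : Type*} [DecidableEq α] {L C : Finset α} {F : Finset (Finset α)}

/-- `C` is a largest set among the proper members of `F` and the singletons of `L`; the
singletons are there so that `C` exists and is proper even when `F = {L}`. -/
theorem IsMaxCommFamOn.exists_split (hF : IsMaxCommFamOn L F) (hL : 1 < L.card) :
    ∃ C ⊂ L, C.Nonempty ∧ (C ∈ F ∨ C.card ≤ 1) ∧
      ∀ I ∈ F, I ≠ L → I ⊆ C ∨ Disjoint I C := by
  have hP : (F.erase L ∪ L.image singleton).Nonempty :=
    ((card_pos.mp (by omega)).image singleton).mono subset_union_right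
  obtain ⟨C, hCP, hCmax⟩ := exists_max_image _ card hP
  obtain ⟨hCL, hC, hCF, hCcomm⟩ :
      C ⊂ L ∧ C.Nonempty ∧ (C ∈ F ∨ C.card ≤ 1) ∧ ∀ I ∈ F, Commutes C I := by
    rcases mem_union.mp hCP with hC | hC
    · obtain ⟨hCL, hCF⟩ := mem_erase.mp hC
      have := hF.1.one_lt_card hCF
      exact ⟨ssubset_of_subset_of_ne (hF.1.subset hCF) hCL, card_pos.mp (by omega), Or.inl hCF,
        fun I hI => hF.1.commutes hCF hI⟩
    · obtain ⟨a, ha, rfl⟩ := mem_image.mp hC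
      refine ⟨ssubset_of_subset_of_ne (singleton_subset_iff.mpr ha) ?_, singleton_nonempty a,
        Or.inr (card_singleton a).le, fun I _ => commutes_singleton_left a I⟩
      rintro rfl
      simp at hL
  refine ⟨C, hCL, hC, hCF, fun I hI hIL => ?_⟩
  have hIC : I.card ≤ C.card := hCmax I (mem_union_left _ (mem_erase.mpr ⟨hIL, hI⟩))
  rcases hCcomm I hI with h | h | h
  · exact Or.inr h.symm
  · exact Or.inl (eq_of_subset_of_card_le h hIC ▸ subset_rfl)
  · exact Or.inl h

theorem IsMaxCommFamOn.sdiff_mem_or_card_le_one (hF : IsMaxCommFamOn L F)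
    (hsplit : ∀ I ∈ F, I ≠ L → I ⊆ C ∨ Disjoint I C) : L \ C ∈ F ∨ (L \ C).card ≤ 1 := by
  refine or_iff_not_imp_right.mpr fun h => hF.mem_of_commutes sdiff_subset (by omega) fun I hI => ?_
  by_cases hIL : I = L
  · exact Or.inr (Or.inr (hIL ▸ sdiff_subset))
  rcases hsplit I hI hIL with h | h
  · exact Or.inl (disjoint_of_subset_left h disjoint_sdiff)
  · exact Or.inr (Or.inl (subset_sdiff.mpr ⟨hF.1.subset hI, h⟩))

theorem IsCommFamOn.card_eq_of_split (hF : IsCommFamOn L F) (hLF : L ∈ F) (hCL : C ⊂ L)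
    (hC : C.Nonempty) (hsplit : ∀ I ∈ F, I ≠ L → I ⊆ C ∨ Disjoint I C) :
    F.card = (F.filter (· ⊆ C)).card + (F.filter (· ⊆ L \ C)).card + 1 := by
  have hdisj : Disjoint (F.filter (· ⊆ C)) (F.filter (· ⊆ L \ C)) := by
    refine disjoint_filter.mpr fun I hI hIC hILC => ?_
    obtain ⟨a, ha⟩ := card_pos.mp (zero_lt_one.trans (hF.one_lt_card hI))
    exact (mem_sdiff.mp (hILC ha)).2 (hIC ha)
  have hL : L ∉ F.filter (· ⊆ C) ∪ F.filter (· ⊆ L \ C) := by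
    simp only [mem_union, mem_filter, not_or, not_and]
    exact ⟨fun _ => hCL.not_subset, fun _ => (sdiff_ssubset hCL.subset hC).not_subset⟩
  have hFsplit : F = insert L (F.filter (· ⊆ C) ∪ F.filter (· ⊆ L \ C)) := by
    ext I
    simp only [mem_insert, mem_union, mem_filter]
    constructor
    · intro hI
      refine or_iff_not_imp_left.mpr fun hIL => ?_
      rcases hsplit I hI hIL with h | h
      · exact Or.inl ⟨hI, h⟩
      · exact Or.inr ⟨hI, subset_sdiff.mpr ⟨hF.subset hI, h⟩⟩
    · rintro (rfl | ⟨hI, -⟩ | ⟨hI, -⟩) <;> assumption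
  calc F.card = (insert L (F.filter (· ⊆ C) ∪ F.filter (· ⊆ L \ C))).card := congrArg card hFsplit
    _ = _ := by rw [card_insert_of_notMem hL, card_union_of_disjoint hdisj]

theorem IsMaxCommFamOn.card_eq (hF : IsMaxCommFamOn L F) : F.card = L.card - 1 := by
  induction L using Finset.strongInduction generalizing F with
  | H L ih =>
  rcases le_or_gt L.card 1 with hL | hL
  · rw [hF.1.eq_empty_of_card_le_one hL, card_empty]
    omega
  have hpart : ∀ S ⊂ L, (S ∈ F ∨ S.card ≤ 1) → (F.filter (· ⊆ S)).card = S.card - 1 := by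
    rintro S hSL (hS | hS)
    · exact ih S hSL (hF.filter_subset hS)
    · simp [(hF.1.filter_subset S).eq_empty_of_card_le_one hS, hS]
  obtain ⟨C, hCL, hC, hCF, hsplit⟩ := hF.exists_split hL
  rw [hF.1.card_eq_of_split (hF.self_mem hL) hCL hC hsplit, hpart C hCL hCF,
    hpart (L \ C) (sdiff_ssubset hCL.subset hC) (hF.sdiff_mem_or_card_le_one hsplit),
    card_sdiff_of_subset hCL.subset]
  have := card_lt_card hCL
  have := hC.card_pos
  omega

end Split

theorem card_maxCommFam_general {α : Type*} [DecidableEq α] (L : Finset α)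
    (F : Finset (Finset α)) (hF : IsMaxCommFamOn L F) :
    F.card = L.card - 1 :=
  hF.card_eq

/-- Every maximal commuting family of a finite set `L` with `|L| > 1` has
exactly `|L| - 1` elements. -/
theorem card_maxCommFam {α : Type*} [DecidableEq α] (L : Finset α)
    (F : Finset (Finset α)) (hL : 1 < L.card) (hF : IsMaxCommFamOn L F) :
    F.card = L.card - 1 :=
  card_maxCommFam_general L F hF
end

section
/- If I is a maximal commuting family of a finite set L with |L| > 2, then L ∈ I, and either (a) there exists I₀ ∈ I with |I₀| = |L| - 1, in which case I \ {L} is a maximal commuting family of I₀, or (b) there exist disjoint I₁, I₂ ∈ I with I₁ ∪ I₂ = L such that I \ {L} = {I ∈ I : I ⊆ I₁} ∪ {I ∈ I : I ⊆ I₂}, and {I ∈ I : I ⊆ I_j} is a maximal commuting family of I_j for j = 1, 2 (whenever |I_j| > 1). -/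
open Finset

section Aux

variable {α : Type*} [DecidableEq α] {L C : Finset α} {F : Finset (Finset α)}

/-- If `C` commutes with every member of a maximal commuting family, it belongs to it. -/
lemma CF.mem_of_commutes (hF : IsMaxCommFamOn L F) (hC : C ⊆ L) (hc : 1 < C.card)
    (hcomm : ∀ I ∈ F, I ≠ C → Disjoint I C ∨ I ⊂ C ∨ C ⊂ I) : C ∈ F := by
  have h : IsCommFamOn L (insert C F) := by
    obtain ⟨h1, h2, h3⟩ := hF.1
    refine ⟨?_, ?_, ?_⟩
    · intro I hI
      rcases mem_insert.1 hI with rfl | hI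
      · exact hC
      · exact h1 I hI
    · intro I hI
      rcases mem_insert.1 hI with rfl | hI
      · exact hc
      · exact h2 I hI
    · intro I hI J hJ hne
      by_cases hIF : I ∈ F <;> by_cases hJF : J ∈ F
      · exact h3 I hIF J hJF hne
      · have hJC : J = C := (mem_insert.1 hJ).resolve_right hJF
        subst hJC
        exact hcomm I hIF hne
      · have hIC : I = C := (mem_insert.1 hI).resolve_right hIF
        subst hIC
        rcases hcomm J hJF (Ne.symm hne) with h | h | h
        · exact Or.inl h.symm
        · exact Or.inr (Or.inr h)
        · exact Or.inr (Or.inl h)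
      · exact absurd (((mem_insert.1 hI).resolve_right hIF).trans
          ((mem_insert.1 hJ).resolve_right hJF).symm) hne
  have := hF.2 _ h (subset_insert _ _)
  rw [← this]; exact mem_insert_self _ _

/-- The maximal members of `F` besides `L`. -/
def Mx (L : Finset α) (F : Finset (Finset α)) : Finset (Finset α) :=
  (F.erase L).filter (fun I => ∀ J ∈ F.erase L, ¬ I ⊂ J)

/-- A block: either a maximal member, or a leftover singleton. -/
def Blk (L : Finset α) (F : Finset (Finset α)) (B : Finset α) : Prop :=
  B ∈ Mx L F ∨ ∃ x ∈ L, x ∉ (Mx L F).sup id ∧ B = {x}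

lemma CF.mx_mem (hJ : C ∈ Mx L F) : C ∈ F.erase L := (mem_filter.1 hJ).1

lemma CF.exists_mx (hI : C ∈ F.erase L) : ∃ J ∈ Mx L F, C ⊆ J := by
  classical
  obtain ⟨J, hJ, hJmax⟩ : ∃ J ∈ (F.erase L).filter (fun J => C ⊆ J),
      ∀ K ∈ (F.erase L).filter (fun J => C ⊆ J), ¬ J < K := by
    obtain ⟨J, hJ⟩ := Finset.exists_maximal (s := (F.erase L).filter (fun J => C ⊆ J))
      ⟨C, mem_filter.2 ⟨hI, Subset.refl C⟩⟩
    exact ⟨J, hJ.1, fun K hK hlt => lt_irrefl J (lt_of_lt_of_le hlt (hJ.2 hK hlt.le))⟩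
  obtain ⟨hJe, hCJ⟩ := mem_filter.1 hJ
  refine ⟨J, mem_filter.2 ⟨hJe, fun K hK hJK => ?_⟩, hCJ⟩
  exact hJmax K (mem_filter.2 ⟨hK, hCJ.trans hJK.subset⟩) (Finset.lt_iff_ssubset.2 hJK)

variable (hF : IsMaxCommFamOn L F)
include hF

lemma CF.blk_subset (hB : Blk L F B) : B ⊆ L := by
  rcases hB with hB | ⟨x, hx, -, rfl⟩
  · exact hF.1.1 _ (mem_of_mem_erase (CF.mx_mem hB))
  · simpa using hx

lemma CF.blk_nonempty (hB : Blk L F B) : B.Nonempty := by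
  rcases hB with hB | ⟨x, hx, -, rfl⟩
  · exact card_pos.1 (lt_trans one_pos (hF.1.2.1 _ (mem_of_mem_erase (CF.mx_mem hB))))
  · exact singleton_nonempty x

lemma CF.blk_disj {B B' : Finset α} (hB : Blk L F B) (hB' : Blk L F B') (hne : B ≠ B') :
    Disjoint B B' := by
  rcases hB with hB | ⟨x, hx, hxU, rfl⟩ <;> rcases hB' with hB' | ⟨y, hy, hyU, rfl⟩
  · obtain ⟨hBe, hBmax⟩ := mem_filter.1 hB
    obtain ⟨hBe', hBmax'⟩ := mem_filter.1 hB'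
    rcases hF.1.2.2 _ (mem_of_mem_erase hBe) _ (mem_of_mem_erase hBe') hne with h | h | h
    · exact h
    · exact absurd h (hBmax _ hBe')
    · exact absurd h (hBmax' _ hBe)
  · refine disjoint_singleton_right.2 fun hy' => hyU ?_
    exact mem_sup.2 ⟨B, hB, hy'⟩
  · refine disjoint_singleton_left.2 fun hx' => hxU ?_
    exact mem_sup.2 ⟨B', hB', hx'⟩
  · refine disjoint_singleton_left.2 fun hx' => hne ?_
    rw [mem_singleton.1 hx']

lemma CF.blk_cover {x : α} (hx : x ∈ L) : ∃ B, Blk L F B ∧ x ∈ B := by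
  by_cases hU : x ∈ (Mx L F).sup id
  · obtain ⟨J, hJ, hxJ⟩ := mem_sup.1 hU
    exact ⟨J, Or.inl hJ, hxJ⟩
  · exact ⟨{x}, Or.inr ⟨x, hx, hU, rfl⟩, mem_singleton_self x⟩

lemma CF.mem_blk (hI : C ∈ F.erase L) : ∃ B, Blk L F B ∧ C ⊆ B := by
  obtain ⟨J, hJ, hCJ⟩ := CF.exists_mx hI
  exact ⟨J, Or.inl hJ, hCJ⟩

lemma CF.blk_ne_L (hL : 2 < L.card) (hB : Blk L F B) : B ≠ L := by
  rcases hB with hB | ⟨x, hx, -, rfl⟩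
  · exact ne_of_mem_erase (CF.mx_mem hB)
  · intro h
    rw [← h, card_singleton] at hL
    omega

lemma CF.two_blocks (hL : 2 < L.card) :
    ∃ B₁ B₂, Blk L F B₁ ∧ Blk L F B₂ ∧ Disjoint B₁ B₂ ∧ B₁ ∪ B₂ = L := by
  have hLne : L.Nonempty := card_pos.1 (by omega)
  obtain ⟨x, hx⟩ := hLne
  obtain ⟨B₁, hB₁, hxB₁⟩ := CF.blk_cover hF hx
  have hB₁L : B₁ ⊂ L :=
    ssubset_of_subset_of_ne (CF.blk_subset hF hB₁) (CF.blk_ne_L hF hL hB₁)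
  obtain ⟨y, hyL, hyB₁⟩ := exists_of_ssubset hB₁L
  obtain ⟨B₂, hB₂, hyB₂⟩ := CF.blk_cover hF hyL
  have hne : B₁ ≠ B₂ := fun h => hyB₁ (h ▸ hyB₂)
  have hdisj : Disjoint B₁ B₂ := CF.blk_disj hF hB₁ hB₂ hne
  refine ⟨B₁, B₂, hB₁, hB₂, hdisj, ?_⟩
  by_contra hU
  have hUsub : B₁ ∪ B₂ ⊆ L := union_subset (CF.blk_subset hF hB₁) (CF.blk_subset hF hB₂)
  obtain ⟨z, hzL, hzU⟩ := exists_of_ssubset (ssubset_of_subset_of_ne hUsub hU)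
  -- B₁ ∪ B₂ commutes with everything, so it is in F; contradiction with maximality of B₁
  have hcardU : 1 < (B₁ ∪ B₂).card := by
    have h1 := CF.blk_nonempty hF hB₁
    have h2 := CF.blk_nonempty hF hB₂
    have := card_union_of_disjoint hdisj
    have := card_pos.2 h1
    have := card_pos.2 h2
    omega
  have hB₁U : B₁ ⊂ B₁ ∪ B₂ := by
    refine ssubset_of_subset_of_ne subset_union_left fun h => ?_
    obtain ⟨w, hw⟩ := CF.blk_nonempty hF hB₂
    have : w ∈ B₁ := h ▸ mem_union_right _ hw
    exact (disjoint_left.1 hdisj this) hw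
  have hmem : B₁ ∪ B₂ ∈ F := by
    refine CF.mem_of_commutes hF hUsub hcardU ?_
    intro I hI hne'
    by_cases hIL : I = L
    · subst hIL
      exact Or.inr (Or.inr (ssubset_of_subset_of_ne hUsub hU))
    · obtain ⟨B, hB, hIB⟩ := CF.mem_blk hF (mem_erase.2 ⟨hIL, hI⟩)
      by_cases h1 : B = B₁
      · exact Or.inr (Or.inl (Finset.ssubset_of_subset_of_ssubset (h1 ▸ hIB) hB₁U))
      by_cases h2 : B = B₂
      · refine Or.inr (Or.inl (Finset.ssubset_of_subset_of_ssubset (h2 ▸ hIB) ?_))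
        refine (Finset.ssubset_iff_of_subset subset_union_right).2
          ⟨x, mem_union_left _ hxB₁, fun hx2 => disjoint_left.1 hdisj hxB₁ hx2⟩
      · refine Or.inl (disjoint_union_right.2 ⟨?_, ?_⟩)
        · exact Finset.disjoint_of_subset_left hIB (CF.blk_disj hF hB hB₁ h1)
        · exact Finset.disjoint_of_subset_left hIB (CF.blk_disj hF hB hB₂ h2)
  -- now B₁ ∪ B₂ ∈ F.erase L, sits inside a block, contradiction
  have hmemE : B₁ ∪ B₂ ∈ F.erase L :=
    mem_erase.2 ⟨fun h => hzU (h ▸ hzL), hmem⟩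
  obtain ⟨J, hJ, hUJ⟩ := CF.exists_mx (C := B₁ ∪ B₂) hmemE
  have hxJ : x ∈ J := hUJ (mem_union_left _ hxB₁)
  rcases hB₁ with hB₁ | ⟨x', hx', hxU', hx1⟩
  · have hJB₁ : J = B₁ := by
      by_contra hne''
      exact (disjoint_left.1 (CF.blk_disj hF (Or.inl hJ) (Or.inl hB₁) hne'') hxJ) hxB₁
    have : y ∈ B₁ := hJB₁ ▸ hUJ (mem_union_right _ hyB₂)
    exact hyB₁ this
  · have hxx : x = x' := by
      have := hx1 ▸ hxB₁; simpa using this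
    exact hxU' (mem_sup.2 ⟨J, hJ, hxx ▸ hxJ⟩)


lemma CF.filter_max {B₁ B₂ : Finset α}
    (hdisj : Disjoint B₁ B₂)
    (hsplit : ∀ I ∈ F, I = L ∨ I ⊆ B₁ ∨ I ⊆ B₂)
    (hB₁L : B₁ ⊂ L) :
    IsMaxCommFamOn B₁ (F.filter (· ⊆ B₁)) := by
  obtain ⟨⟨hsub, hcard, hcomm⟩, hmax⟩ := hF
  refine ⟨⟨?_, ?_, ?_⟩, ?_⟩
  · intro I hI; exact (mem_filter.1 hI).2
  · intro I hI; exact hcard I (mem_filter.1 hI).1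
  · intro I hI J hJ hne
    exact hcomm I (mem_filter.1 hI).1 J (mem_filter.1 hJ).1 hne
  · intro G hG hsubG
    have key : ∀ I ∈ F ∪ G, ∀ J ∈ G, I ≠ J → Disjoint I J ∨ I ⊂ J ∨ J ⊂ I := by
      intro I hI J hJ hne
      by_cases hIG : I ∈ G
      · exact hG.2.2 I hIG J hJ hne
      · have hIF : I ∈ F := (mem_union.1 hI).resolve_right hIG
        have hJB : J ⊆ B₁ := hG.1 J hJ
        rcases hsplit I hIF with rfl | h | h
        · exact Or.inr (Or.inr (Finset.ssubset_of_subset_of_ssubset hJB hB₁L))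
        · exact absurd (hsubG (mem_filter.2 ⟨hIF, h⟩)) hIG
        · exact Or.inl (Finset.disjoint_of_subset_left h
            (Finset.disjoint_of_subset_right hJB hdisj.symm))
    have hH : IsCommFamOn L (F ∪ G) := by
      refine ⟨?_, ?_, ?_⟩
      · intro I hI
        rcases mem_union.1 hI with hI | hI
        · exact hsub I hI
        · exact (hG.1 I hI).trans hB₁L.subset
      · intro I hI
        rcases mem_union.1 hI with hI | hI
        · exact hcard I hI
        · exact hG.2.1 I hI
      · intro I hI J hJ hne
        by_cases hJG : J ∈ G
        · exact key I hI J hJG hne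
        · have hJF : J ∈ F := (mem_union.1 hJ).resolve_right hJG
          by_cases hIG : I ∈ G
          · rcases key J hJ I hIG (Ne.symm hne) with h | h | h
            · exact Or.inl h.symm
            · exact Or.inr (Or.inr h)
            · exact Or.inr (Or.inl h)
          · exact hcomm I ((mem_union.1 hI).resolve_right hIG) J hJF hne
    have heq : F ∪ G = F := hmax _ hH subset_union_left
    apply Finset.Subset.antisymm
    · intro J hJ
      exact mem_filter.2 ⟨heq ▸ mem_union_right F hJ, hG.1 J hJ⟩
    · exact hsubG

end Aux

/-- Structure of a maximal commuting family of `L` with `|L| > 2`. -/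
theorem maxCommFam_structure {α : Type*} [DecidableEq α] (L : Finset α)
    (F : Finset (Finset α)) (hL : 2 < L.card) (hF : IsMaxCommFamOn L F) :
    L ∈ F ∧
      ((∃ I₀ ∈ F, I₀.card = L.card - 1 ∧ IsMaxCommFamOn I₀ (F.erase L)) ∨
        ∃ I₁ ∈ F, ∃ I₂ ∈ F, Disjoint I₁ I₂ ∧ I₁ ∪ I₂ = L ∧
          F.erase L = F.filter (· ⊆ I₁) ∪ F.filter (· ⊆ I₂) ∧
          (1 < I₁.card → IsMaxCommFamOn I₁ (F.filter (· ⊆ I₁))) ∧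
          (1 < I₂.card → IsMaxCommFamOn I₂ (F.filter (· ⊆ I₂)))) := by
  classical
  obtain ⟨⟨hsub, hcard, hcomm⟩, hmax⟩ := hF
  have hF' : IsMaxCommFamOn L F := ⟨⟨hsub, hcard, hcomm⟩, hmax⟩
  have hLF : L ∈ F := by
    refine CF.mem_of_commutes hF' (Subset.refl L) (by omega) ?_
    intro I hI hne
    exact Or.inr (Or.inl (ssubset_of_subset_of_ne (hsub I hI) hne))
  refine ⟨hLF, ?_⟩
  obtain ⟨B₁, B₂, hB₁, hB₂, hdisj, hUL⟩ := CF.two_blocks hF' hL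
  -- every member of F.erase L is contained in B₁ or B₂
  have hsplit : ∀ I ∈ F.erase L, I ⊆ B₁ ∨ I ⊆ B₂ := by
    intro I hI
    obtain ⟨B, hB, hIB⟩ := CF.mem_blk hF' hI
    by_cases h1 : B = B₁
    · exact Or.inl (h1 ▸ hIB)
    by_cases h2 : B = B₂
    · exact Or.inr (h2 ▸ hIB)
    · exfalso
      obtain ⟨w, hw⟩ := CF.blk_nonempty hF' hB
      have hwL : w ∈ L := CF.blk_subset hF' hB hw
      rw [← hUL, mem_union] at hwL
      rcases hwL with hw1 | hw2
      · exact (disjoint_left.1 (CF.blk_disj hF' hB hB₁ h1) hw) hw1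
      · exact (disjoint_left.1 (CF.blk_disj hF' hB hB₂ h2) hw) hw2
  -- singleton blocks cannot contain members of F.erase L
  have hsingleton_case : ∀ (x : α) (B : Finset α), Blk L F B → B ≠ {x} →
      Disjoint B {x} → B ∪ {x} = L → True := fun _ _ _ _ _ _ => trivial
  -- dispatch by block type
  rcases hB₁ with hM₁ | ⟨x, hxL, hxU, rfl⟩
  case inr =>
    -- B₁ = {x}: swap roles; B₂ must be in Mx (else |L| = 2)
    rcases hB₂ with hM₂ | ⟨y, hyL, hyU, rfl⟩
    case inr =>
      exfalso
      have : L.card ≤ 2 := by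
        rw [← hUL]
        exact le_trans (card_union_le _ _) (by simp)
      omega
    -- case (a) with I₀ = B₂, extra point x
    · left
      have hI₀F : B₂ ∈ F := mem_of_mem_erase (CF.mx_mem hM₂)
      have hI₀card : B₂.card = L.card - 1 := by
        have := card_union_of_disjoint hdisj
        rw [hUL] at this
        simp at this
        omega
      have hsub' : ∀ I ∈ F.erase L, I ⊆ B₂ := by
        intro I hI
        rcases hsplit I hI with h | h
        · exfalso
          have := hcard I (mem_of_mem_erase hI)
          have := card_le_card h
          simp at this
          omega
        · exact h
      refine ⟨B₂, hI₀F, hI₀card, ⟨⟨hsub', ?_, ?_⟩, ?_⟩⟩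
      · intro I hI; exact hcard I (mem_of_mem_erase hI)
      · intro I hI J hJ hne
        exact hcomm I (mem_of_mem_erase hI) J (mem_of_mem_erase hJ) hne
      · intro G hG hsubG
        have hB₂L : B₂ ⊂ L := by
          refine ssubset_of_subset_of_ne (hsub B₂ hI₀F) fun h => ?_
          have : x ∈ B₂ := h ▸ hxL
          exact (disjoint_right.1 hdisj this) (mem_singleton_self x)
        have hins : IsCommFamOn L (insert L G) := by
          refine ⟨?_, ?_, ?_⟩
          · intro I hI
            by_cases h : I = L
            · exact le_of_eq h
            · exact (hG.1 I ((mem_insert.1 hI).resolve_left h)).trans hB₂L.subset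
          · intro I hI
            by_cases h : I = L
            · rw [h]; omega
            · exact hG.2.1 I ((mem_insert.1 hI).resolve_left h)
          · intro I hI J hJ hne
            by_cases hIG : I ∈ G <;> by_cases hJG : J ∈ G
            · exact hG.2.2 I hIG J hJG hne
            · have hJL : J = L := (mem_insert.1 hJ).resolve_right hJG
              subst hJL
              exact Or.inr (Or.inl (Finset.ssubset_of_subset_of_ssubset (hG.1 I hIG) hB₂L))
            · have hIL : I = L := (mem_insert.1 hI).resolve_right hIG
              subst hIL
              exact Or.inr (Or.inr (Finset.ssubset_of_subset_of_ssubset (hG.1 J hJG) hB₂L))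
            · exact absurd (((mem_insert.1 hI).resolve_right hIG).trans
                ((mem_insert.1 hJ).resolve_right hJG).symm) hne
        have hFsub : F ⊆ insert L G := by
          intro I hI
          by_cases h : I = L
          · exact h ▸ mem_insert_self _ _
          · exact mem_insert_of_mem (hsubG (mem_erase.2 ⟨h, hI⟩))
        have heq : insert L G = F := hmax _ hins hFsub
        apply Finset.Subset.antisymm
        · intro I hIG
          refine mem_erase.2 ⟨fun h => ?_, heq ▸ mem_insert_of_mem hIG⟩
          have := card_le_card (hG.1 I hIG)
          rw [h, hI₀card] at this
          omega
        · exact hsubG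
  -- B₁ ∈ Mx
  · rcases hB₂ with hM₂ | ⟨y, hyL, hyU, rfl⟩
    case inr =>
      -- case (a) with I₀ = B₁
      left
      have hI₀F : B₁ ∈ F := mem_of_mem_erase (CF.mx_mem hM₁)
      have hI₀card : B₁.card = L.card - 1 := by
        have := card_union_of_disjoint hdisj
        rw [hUL] at this
        simp at this
        omega
      have hsub' : ∀ I ∈ F.erase L, I ⊆ B₁ := by
        intro I hI
        rcases hsplit I hI with h | h
        · exact h
        · exfalso
          have := hcard I (mem_of_mem_erase hI)
          have := card_le_card h
          simp at this
          omega
      refine ⟨B₁, hI₀F, hI₀card, ⟨⟨hsub', ?_, ?_⟩, ?_⟩⟩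
      · intro I hI; exact hcard I (mem_of_mem_erase hI)
      · intro I hI J hJ hne
        exact hcomm I (mem_of_mem_erase hI) J (mem_of_mem_erase hJ) hne
      · intro G hG hsubG
        have hB₁L : B₁ ⊂ L := by
          refine ssubset_of_subset_of_ne (hsub B₁ hI₀F) fun h => ?_
          have : y ∈ B₁ := h ▸ hyL
          exact (disjoint_left.1 hdisj this) (mem_singleton_self y)
        have hins : IsCommFamOn L (insert L G) := by
          refine ⟨?_, ?_, ?_⟩
          · intro I hI
            by_cases h : I = L
            · exact le_of_eq h
            · exact (hG.1 I ((mem_insert.1 hI).resolve_left h)).trans hB₁L.subset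
          · intro I hI
            by_cases h : I = L
            · rw [h]; omega
            · exact hG.2.1 I ((mem_insert.1 hI).resolve_left h)
          · intro I hI J hJ hne
            by_cases hIG : I ∈ G <;> by_cases hJG : J ∈ G
            · exact hG.2.2 I hIG J hJG hne
            · have hJL : J = L := (mem_insert.1 hJ).resolve_right hJG
              subst hJL
              exact Or.inr (Or.inl (Finset.ssubset_of_subset_of_ssubset (hG.1 I hIG) hB₁L))
            · have hIL : I = L := (mem_insert.1 hI).resolve_right hIG
              subst hIL
              exact Or.inr (Or.inr (Finset.ssubset_of_subset_of_ssubset (hG.1 J hJG) hB₁L))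
            · exact absurd (((mem_insert.1 hI).resolve_right hIG).trans
                ((mem_insert.1 hJ).resolve_right hJG).symm) hne
        have hFsub : F ⊆ insert L G := by
          intro I hI
          by_cases h : I = L
          · exact h ▸ mem_insert_self _ _
          · exact mem_insert_of_mem (hsubG (mem_erase.2 ⟨h, hI⟩))
        have heq : insert L G = F := hmax _ hins hFsub
        apply Finset.Subset.antisymm
        · intro I hIG
          refine mem_erase.2 ⟨fun h => ?_, heq ▸ mem_insert_of_mem hIG⟩
          have := card_le_card (hG.1 I hIG)
          rw [h, hI₀card] at this
          omega
        · exact hsubG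
    -- case (b): both blocks in Mx
    · right
      have hI₁F : B₁ ∈ F := mem_of_mem_erase (CF.mx_mem hM₁)
      have hI₂F : B₂ ∈ F := mem_of_mem_erase (CF.mx_mem hM₂)
      have hB₁neL : B₁ ≠ L := ne_of_mem_erase (CF.mx_mem hM₁)
      have hB₂neL : B₂ ≠ L := ne_of_mem_erase (CF.mx_mem hM₂)
      have hB₁L : B₁ ⊂ L := ssubset_of_subset_of_ne (hsub B₁ hI₁F) hB₁neL
      have hB₂L : B₂ ⊂ L := ssubset_of_subset_of_ne (hsub B₂ hI₂F) hB₂neL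
      have hdecomp : F.erase L = F.filter (· ⊆ B₁) ∪ F.filter (· ⊆ B₂) := by
        ext I
        simp only [mem_erase, mem_union, mem_filter]
        constructor
        · rintro ⟨hne, hIF⟩
          rcases hsplit I (mem_erase.2 ⟨hne, hIF⟩) with h | h
          · exact Or.inl ⟨hIF, h⟩
          · exact Or.inr ⟨hIF, h⟩
        · rintro (⟨hIF, h⟩ | ⟨hIF, h⟩)
          · exact ⟨fun he => absurd (he ▸ h) hB₁L.not_subset, hIF⟩
          · exact ⟨fun he => absurd (he ▸ h) hB₂L.not_subset, hIF⟩
      have hsplitF : ∀ I ∈ F, I = L ∨ I ⊆ B₁ ∨ I ⊆ B₂ := by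
        intro I hIF
        by_cases h : I = L
        · exact Or.inl h
        · exact Or.inr (hsplit I (mem_erase.2 ⟨h, hIF⟩))
      have hsplitF' : ∀ I ∈ F, I = L ∨ I ⊆ B₂ ∨ I ⊆ B₁ := by
        intro I hIF
        rcases hsplitF I hIF with h | h | h
        · exact Or.inl h
        · exact Or.inr (Or.inr h)
        · exact Or.inr (Or.inl h)
      exact ⟨B₁, hI₁F, B₂, hI₂F, hdisj, hUL, hdecomp,
        fun _ => CF.filter_max ⟨⟨hsub, hcard, hcomm⟩, hmax⟩ hdisj hsplitF hB₁L,
        fun _ => CF.filter_max ⟨⟨hsub, hcard, hcomm⟩, hmax⟩ hdisj.symm hsplitF' hB₂L⟩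
end

section
/- Under the KZ integrability conditions, the matrix A_{L_n} = Σ_{0 ≤ p < q < n} A_{pq} commutes with A_I for every subset I ⊆ {0,...,n-1}. -/
open Finset Matrix

/-- `A_I = ∑_{{p,q} ⊆ I, p < q} A_{pq}` (which is `0` when `|I| ≤ 1`). -/
noncomputable def resSum {N : ℕ} {ι : Type*} [LinearOrder ι] [DecidableEq ι]
    (A : ι → ι → Matrix (Fin N) (Fin N) ℂ) (I : Finset ι) :
    Matrix (Fin N) (Fin N) ℂ :=
  ∑ p ∈ I, ∑ q ∈ I.filter (fun q => p < q), A p q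

lemma resSum_insert {N : ℕ} {ι : Type*} [LinearOrder ι] [DecidableEq ι]
    (A : ι → ι → Matrix (Fin N) (Fin N) ℂ) (hsymm : ∀ i j, A i j = A j i)
    {k : ι} {T : Finset ι} (hk : k ∉ T) :
    resSum A (insert k T) = resSum A T + ∑ p ∈ T, A p k := by
  unfold resSum
  rw [Finset.sum_insert hk]
  have h1 : (insert k T).filter (fun q => k < q) = T.filter (fun q => k < q) := by
    rw [Finset.filter_insert, if_neg (lt_irrefl k)]
  have h2 : ∀ p ∈ T, ∑ q ∈ (insert k T).filter (fun q => p < q), A p q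
      = (∑ q ∈ T.filter (fun q => p < q), A p q) + if p < k then A p k else 0 := by
    intro p hp
    rw [Finset.filter_insert]
    by_cases hpk : p < k
    · rw [if_pos hpk, Finset.sum_insert (by simp [hk]), if_pos hpk, add_comm]
    · rw [if_neg hpk, if_neg hpk, add_zero]
  rw [h1, Finset.sum_congr rfl h2, Finset.sum_add_distrib]
  have h3 : (∑ q ∈ T.filter (fun q => k < q), A k q)
      + ∑ p ∈ T, (if p < k then A p k else 0) = ∑ p ∈ T, A p k := by
    rw [← Finset.sum_filter]
    have h4 : filter (fun q => k < q) T = filter (fun q => ¬ q < k) T := by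
      apply Finset.filter_congr
      intro q hq
      have : q ≠ k := fun h => hk (h ▸ hq)
      constructor
      · intro h; exact not_lt.mpr h.le
      · intro h; exact lt_of_le_of_ne (not_lt.mp h) (Ne.symm this)
    have h5 : ∀ q ∈ filter (fun q => ¬ q < k) T, A k q = A q k := fun q _ => hsymm k q
    rw [h4, Finset.sum_congr rfl h5, add_comm,
      Finset.sum_filter_add_sum_filter_not T (fun p => p < k) (fun p => A p k)]
  rw [← h3]
  abel

lemma edge_comm {N : ℕ} {ι : Type*} [LinearOrder ι] [DecidableEq ι]
    (A : ι → ι → Matrix (Fin N) (Fin N) ℂ)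
    (h4 : ∀ i j k l : ι, i ≠ j → i ≠ k → i ≠ l → j ≠ k → j ≠ l → k ≠ l →
      Commute (A i j) (A k l))
    (h3 : ∀ i j k : ι, i ≠ j → i ≠ k → j ≠ k →
      Commute (A i j) (A i k + A j k))
    {I : Finset ι} {q : ι} (hq : q ∉ I) {i j : ι} (hi : i ∈ I) (hj : j ∈ I)
    (hij : i ≠ j) : Commute (A i j) (∑ p ∈ I, A p q) := by
  have hsub : {i, j} ⊆ I := by
    intro x hx; rcases Finset.mem_insert.mp hx with h | h
    · exact h ▸ hi
    · exact (Finset.mem_singleton.mp h) ▸ hj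
  rw [← Finset.sum_sdiff hsub, Finset.sum_pair hij]
  have hiq : i ≠ q := fun h => hq (h ▸ hi)
  have hjq : j ≠ q := fun h => hq (h ▸ hj)
  refine Commute.add_right (Commute.sum_right _ _ _ fun p hp => ?_) (h3 i j q hij hiq hjq)
  simp only [Finset.mem_sdiff, Finset.mem_insert, Finset.mem_singleton] at hp
  have hpq : p ≠ q := fun h => hq (h ▸ hp.1)
  exact h4 i j p q hij (fun h => hp.2 (Or.inl h.symm)) hiq (fun h => hp.2 (Or.inr h.symm)) hjq hpq

lemma resSum_comm_edge {N : ℕ} {ι : Type*} [LinearOrder ι] [DecidableEq ι]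
    (A : ι → ι → Matrix (Fin N) (Fin N) ℂ)
    (h4 : ∀ i j k l : ι, i ≠ j → i ≠ k → i ≠ l → j ≠ k → j ≠ l → k ≠ l →
      Commute (A i j) (A k l))
    (h3 : ∀ i j k : ι, i ≠ j → i ≠ k → j ≠ k →
      Commute (A i j) (A i k + A j k))
    {I : Finset ι} {q : ι} (hq : q ∉ I) :
    Commute (resSum A I) (∑ p ∈ I, A p q) := by
  refine Commute.sum_left _ _ _ fun i hi => Commute.sum_left _ _ _ fun j hj => ?_
  rw [Finset.mem_filter] at hj
  exact edge_comm A h4 h3 hq hi hj.1 (ne_of_lt hj.2)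

lemma resSum_comm_out {N : ℕ} {ι : Type*} [LinearOrder ι] [DecidableEq ι]
    (A : ι → ι → Matrix (Fin N) (Fin N) ℂ)
    (h4 : ∀ i j k l : ι, i ≠ j → i ≠ k → i ≠ l → j ≠ k → j ≠ l → k ≠ l →
      Commute (A i j) (A k l))
    {I : Finset ι} {p q : ι} (hp : p ∉ I) (hq : q ∉ I) (hpq : p ≠ q) :
    Commute (resSum A I) (A p q) := by
  refine Commute.sum_left _ _ _ fun i hi => Commute.sum_left _ _ _ fun j hj => ?_
  rw [Finset.mem_filter] at hj
  have hip : i ≠ p := fun h => hp (h ▸ hi)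
  have hiq : i ≠ q := fun h => hq (h ▸ hi)
  have hjp : j ≠ p := fun h => hp (h ▸ hj.1)
  have hjq : j ≠ q := fun h => hq (h ▸ hj.1)
  exact h4 i j p q (ne_of_lt hj.2) hip hiq hjp hjq hpq

/-- Under the KZ integrability conditions, `A_{L_n}` commutes with every `A_I`. -/
theorem resSum_univ_commute {N n : ℕ} (A : Fin n → Fin n → Matrix (Fin N) (Fin N) ℂ)
    (hsymm : ∀ i j, A i j = A j i)
    (h4 : ∀ i j k l : Fin n, i ≠ j → i ≠ k → i ≠ l → j ≠ k → j ≠ l → k ≠ l →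
      Commute (A i j) (A k l))
    (h3 : ∀ i j k : Fin n, i ≠ j → i ≠ k → j ≠ k →
      Commute (A i j) (A i k + A j k)) :
    ∀ I : Finset (Fin n), Commute (resSum A Finset.univ) (resSum A I) := by
  intro I
  have key : ∀ S : Finset (Fin n), Commute (resSum A (I ∪ S)) (resSum A I) := by
    intro S
    induction S using Finset.induction with
    | empty => rw [Finset.union_empty]
    | insert _ _ hkS ih =>
      rename_i k S
      rw [Finset.union_insert]
      by_cases hk : k ∈ I ∪ S
      · rwa [Finset.insert_eq_self.mpr hk]
      · rw [resSum_insert A hsymm hk]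
        refine Commute.add_left ih ?_
        have hkI : k ∉ I := fun h => hk (Finset.mem_union_left _ h)
        have hsub : I ⊆ I ∪ S := Finset.subset_union_left
        rw [← Finset.sum_sdiff hsub]
        refine Commute.add_left ?_ (resSum_comm_edge A h4 h3 hkI).symm
        refine Commute.sum_left _ _ _ fun p hp => ?_
        rw [Finset.mem_sdiff] at hp
        have hpk : p ≠ k := fun h => hk (h ▸ hp.1)
        exact (resSum_comm_out A h4 hp.2 hkI hpk).symm
  have := key Finset.univ
  rwa [Finset.union_eq_right.mpr (Finset.subset_univ I)] at this
end

section
/- Let I be a maximal commuting family of L = {0,...,n-1} with a choice, for each I ∈ I, of a partition I = b̄(I) ⊔ b̄'(I) into two members of Ĩ = I ∪ {{ν} : ν ∈ L}. For I ∈ I, pick n_I ∈ b̄(I) and n'_I ∈ b̄'(I) determined as the 'surviving players' (i.e., the unique elements not eliminated within the subtournaments b̄(I), b̄'(I)), and set x_I = x_{n_I} - x_{n'_I} as linear forms in variables x_0,...,x_{n-1}. Then the n-1 linear forms {x_I : I ∈ I} are linearly independent over ℂ, and for any distinct i, j ∈ L, x_i - x_j = Σ_{I ∈ I} ε_{i,j}^I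 x_I where ε_{i,j}^I = 0 unless I ⊆ I_{i,j}, ε_{i,j}^{I_{i,j}} ∈ {1,-1}, and all ε_{i,j}^I ∈ ℤ; here I_{i,j} is the minimal element of I containing both i and j. -/
open Finset

/-- `b` is a losing-side map on the family `F`. -/
def IsLosingMap {α : Type*} [DecidableEq α] (F : Finset (Finset α))
    (b : Finset α → Finset α) : Prop :=
  ∀ I ∈ F, b I ⊆ I ∧ (b I).Nonempty ∧ b I ≠ I ∧
    (b I ∈ F ∨ (b I).card = 1) ∧ ((I \ b I) ∈ F ∨ (I \ b I).card = 1)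

/-- Membership criterion for the pair of survivors of a game `I`. -/
lemma myaux_mem_pair {α : Type*} [DecidableEq α]
    {F : Finset (Finset α)} {b : Finset α → Finset α} {nL nR : Finset α → α}
    (hn : ∀ I ∈ F, nL I ∈ b I ∧ nR I ∈ I \ b I ∧
      I \ (F.filter (· ⊂ I)).biUnion b = {nL I, nR I})
    {I : Finset α} (hI : I ∈ F) {x : α} :
    (x = nL I ∨ x = nR I) ↔ (x ∈ I ∧ ∀ J ∈ F, J ⊂ I → x ∉ b J) := by
  have h := (hn I hI).2.2
  constructor
  · intro hx
    have hx' : x ∈ I \ (F.filter (· ⊂ I)).biUnion b := by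
      rw [h]; rcases hx with rfl | rfl <;> simp
    rw [mem_sdiff, mem_biUnion] at hx'
    refine ⟨hx'.1, fun J hJ hJI hxb => hx'.2 ⟨J, mem_filter.2 ⟨hJ, hJI⟩, hxb⟩⟩
  · intro ⟨hxI, hx⟩
    have : x ∈ ({nL I, nR I} : Finset α) := by
      rw [← h, mem_sdiff, mem_biUnion]
      refine ⟨hxI, fun ⟨J, hJ, hxb⟩ => ?_⟩
      rw [mem_filter] at hJ
      exact hx J hJ.1 hJ.2 hxb
    simpa using this

/-- If `x` survives all games strictly inside `I'` and lies in a game `H ⊂ I'`,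
then `x` is the right survivor of `H`. -/
lemma myaux_surv {α : Type*} [DecidableEq α]
    {F : Finset (Finset α)} {b : Finset α → Finset α} {nL nR : Finset α → α}
    (hn : ∀ I ∈ F, nL I ∈ b I ∧ nR I ∈ I \ b I ∧
      I \ (F.filter (· ⊂ I)).biUnion b = {nL I, nR I})
    {I' H : Finset α} (hH : H ∈ F) (hHI : H ⊂ I')
    {x : α} (hxH : x ∈ H) (hx : ∀ J ∈ F, J ⊂ I' → x ∉ b J) : x = nR H := by
  have hpair : x = nL H ∨ x = nR H :=
    (myaux_mem_pair hn hH).2 ⟨hxH, fun J hJ hJH => hx J hJ (hJH.trans hHI)⟩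
  rcases hpair with rfl | rfl
  · exact absurd (hn H hH).1 (hx H hH hHI)
  · rfl

/-- Telescoping lemma: `x_ν - x_{nR I'}` is a 0/1 combination of the forms
supported inside `I'`, with coefficient at `I'` equal to 1 iff `ν ∈ b I'`. -/
lemma myaux_telescope {α : Type*} [Fintype α] [DecidableEq α]
    {F : Finset (Finset α)} {b : Finset α → Finset α} {nL nR : Finset α → α}
    (hb : IsLosingMap F b)
    (hn : ∀ I ∈ F, nL I ∈ b I ∧ nR I ∈ I \ b I ∧
      I \ (F.filter (· ⊂ I)).biUnion b = {nL I, nR I}) :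
    ∀ (m : ℕ) (I' : Finset α), I' ∈ F → I'.card ≤ m → ∀ ν ∈ I',
    ∃ ε : Finset α → ℤ,
      (Pi.single ν 1 - Pi.single (nR I') 1 : α → ℂ) =
        ∑ I ∈ F, (ε I : ℂ) • (Pi.single (nL I) 1 - Pi.single (nR I) 1 : α → ℂ) ∧
      (∀ I ∈ F, ¬ I ⊆ I' → ε I = 0) ∧
      ε I' = if ν ∈ b I' then 1 else 0 := by
  intro m
  induction m with
  | zero =>
    intro I' hI' hcard ν hν
    have : I' = ∅ := card_eq_zero.1 (Nat.le_zero.1 hcard)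
    simp [this] at hν
  | succ m ih =>
    intro I' hI' hcard ν hν
    obtain ⟨hbsub, hbne, hbneq, hbF, hbF'⟩ := hb I' hI'
    have hbssub : b I' ⊂ I' := Finset.ssubset_iff_subset_ne.2 ⟨hbsub, hbneq⟩
    by_cases hνb : ν ∈ b I'
    · -- ν in the losing side
      rcases hbF with hH | hcard1
      · -- b I' ∈ F
        have hHss : b I' ⊂ I' := hbssub
        have hHcard : (b I').card ≤ m := Nat.lt_succ_iff.1 (lt_of_lt_of_le (card_lt_card hHss) hcard)
        have hnLx := (myaux_mem_pair hn hI').1 (Or.inl rfl)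
        have hnLH : nL I' = nR (b I') := myaux_surv hn hH hHss (hn I' hI').1 hnLx.2
        obtain ⟨ε₀, heq, hsupp, hval⟩ := ih (b I') hH hHcard ν hνb
        refine ⟨fun I => ε₀ I + if I = I' then 1 else 0, ?_, ?_, ?_⟩
        · have key : (Pi.single ν 1 - Pi.single (nR I') 1 : α → ℂ) =
              (Pi.single ν 1 - Pi.single (nR (b I')) 1 : α → ℂ)
              + (Pi.single (nL I') 1 - Pi.single (nR I') 1 : α → ℂ) := by
            rw [← hnLH]; abel
          rw [key, heq]
          have hterm : ∀ I ∈ F, ((ε₀ I + if I = I' then 1 else 0 : ℤ) : ℂ) •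
              (Pi.single (nL I) 1 - Pi.single (nR I) 1 : α → ℂ) =
              (ε₀ I : ℂ) • (Pi.single (nL I) 1 - Pi.single (nR I) 1 : α → ℂ)
              + (if I = I' then (Pi.single (nL I) 1 - Pi.single (nR I) 1 : α → ℂ) else 0) :=
            fun I _ => by push_cast; rw [add_smul]; congr 1; split <;> simp
          rw [Finset.sum_congr rfl hterm, Finset.sum_add_distrib,
            Finset.sum_eq_single_of_mem I' hI' (fun x _ hx => if_neg hx), if_pos rfl]
        · intro I hIF hInsub
          have h1 : ε₀ I = 0 := hsupp I hIF (fun hIH => hInsub (hIH.trans hHss.subset))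
          have h2 : I ≠ I' := fun h => hInsub (h ▸ subset_rfl)
          simp [h1, h2]
        · have h0 : ε₀ I' = 0 :=
            hsupp I' hI' (fun h => hHss.ne (subset_antisymm hHss.subset h))
          simp [h0, hνb]
      · -- b I' is a singleton, so ν = nL I'
        have hbs : b I' = {nL I'} := by
          obtain ⟨a, ha⟩ := card_eq_one.1 hcard1
          have := (hn I' hI').1
          rw [ha, mem_singleton] at this
          rw [ha, this]
        have hνnL : ν = nL I' := by rw [hbs, mem_singleton] at hνb; exact hνb
        refine ⟨fun I => if I = I' then 1 else 0, ?_, ?_, ?_⟩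
        · subst hνnL
          have hterm : ∀ I ∈ F, ((if I = I' then (1:ℤ) else 0 : ℤ) : ℂ) •
              (Pi.single (nL I) 1 - Pi.single (nR I) 1 : α → ℂ) =
              (if I = I' then (Pi.single (nL I) 1 - Pi.single (nR I) 1 : α → ℂ) else 0) :=
            fun I _ => by split <;> simp
          rw [Finset.sum_congr rfl hterm,
            Finset.sum_eq_single_of_mem I' hI' (fun x _ hx => if_neg hx), if_pos rfl]
        · intro I hIF hInsub
          have : I ≠ I' := fun h => hInsub (h ▸ subset_rfl)
          simp [this]
        · simp [hνb]
    · -- ν in the winning side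
      have hνH : ν ∈ I' \ b I' := mem_sdiff.2 ⟨hν, hνb⟩
      rcases hbF' with hH | hcard1
      · have hHss : I' \ b I' ⊂ I' := by
          refine Finset.ssubset_iff_subset_ne.2 ⟨sdiff_subset, fun h => ?_⟩
          obtain ⟨a, ha⟩ := hbne
          exact (mem_sdiff.1 (h.symm ▸ hbsub ha)).2 ha
        have hHcard : (I' \ b I').card ≤ m :=
          Nat.lt_succ_iff.1 (lt_of_lt_of_le (card_lt_card hHss) hcard)
        have hnRx := (myaux_mem_pair hn hI').1 (Or.inr rfl)
        have hnRH : nR I' = nR (I' \ b I') := myaux_surv hn hH hHss (hn I' hI').2.1 hnRx.2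
        obtain ⟨ε₀, heq, hsupp, hval⟩ := ih (I' \ b I') hH hHcard ν hνH
        refine ⟨ε₀, ?_, ?_, ?_⟩
        · rw [hnRH]; exact heq
        · intro I hIF hInsub
          exact hsupp I hIF (fun hIH => hInsub (hIH.trans hHss.subset))
        · have h0 : ε₀ I' = 0 :=
            hsupp I' hI' (fun h => hHss.ne (subset_antisymm hHss.subset h))
          simp [h0, hνb]
      · have hsing : I' \ b I' = {nR I'} := by
          obtain ⟨a, ha⟩ := card_eq_one.1 hcard1
          have := (hn I' hI').2.1
          rw [ha, mem_singleton] at this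
          rw [ha, this]
        have hνnR : ν = nR I' := by rw [hsing, mem_singleton] at hνH; exact hνH
        refine ⟨fun _ => 0, ?_, ?_, ?_⟩
        · subst hνnR; simp
        · intro I _ _; rfl
        · simp [hνb]

/-- Linear independence of the forms. -/
lemma myaux_li {α : Type*} [Fintype α] [DecidableEq α]
    {F : Finset (Finset α)} {b : Finset α → Finset α} {nL nR : Finset α → α}
    (hcomm : ∀ I ∈ F, ∀ J ∈ F, I ≠ J → Disjoint I J ∨ I ⊂ J ∨ J ⊂ I)
    (hn : ∀ I ∈ F, nL I ∈ b I ∧ nR I ∈ I \ b I ∧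
      I \ (F.filter (· ⊂ I)).biUnion b = {nL I, nR I}) :
    LinearIndependent ℂ
      (fun I : F => (Pi.single (nL I.1) 1 - Pi.single (nR I.1) 1 : α → ℂ)) := by
  classical
  rw [Fintype.linearIndependent_iff]
  intro g hg
  by_contra hcon
  push_neg at hcon
  obtain ⟨i₀, hi₀⟩ := hcon
  set S : Finset (Finset α) := (F.attach.filter (fun I => g I ≠ 0)).image Subtype.val with hS
  have hSne : S.Nonempty := ⟨i₀.1, mem_image.2 ⟨i₀, mem_filter.2 ⟨mem_attach _ _, hi₀⟩, rfl⟩⟩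
  obtain ⟨I₀, hI₀S, hI₀min⟩ := S.exists_min_image card hSne
  obtain ⟨⟨I₀, hI₀F⟩, hI₀', rfl⟩ := mem_image.1 hI₀S
  have hgI₀ : g ⟨I₀, hI₀F⟩ ≠ 0 := (mem_filter.1 hI₀').2
  have hx : nL I₀ ∈ b I₀ := (hn I₀ hI₀F).1
  have hxpair := (myaux_mem_pair hn hI₀F).1 (Or.inl rfl)
  have hzero : ∀ i : {x // x ∈ F}, i ≠ ⟨I₀, hI₀F⟩ →
      g i * ((if nL I₀ = nL i.1 then (1:ℂ) else 0) - (if nL I₀ = nR i.1 then 1 else 0)) = 0 := by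
    intro i hne
    by_cases hgi : g i = 0
    · rw [hgi, zero_mul]
    · have hiS : i.1 ∈ S := mem_image.2 ⟨i, mem_filter.2 ⟨mem_attach _ _, hgi⟩, rfl⟩
      have hIne : i.1 ≠ I₀ := fun h => hne (Subtype.ext h)
      have hnot : ¬ (nL I₀ = nL i.1 ∨ nL I₀ = nR i.1) := by
        intro hmem
        have hp' := ((myaux_mem_pair hn i.2).1 hmem)
        rcases hcomm i.1 i.2 I₀ hI₀F hIne with hd | hss | hss
        · exact (Finset.disjoint_left.1 hd) hp'.1 hxpair.1
        · exact absurd (hI₀min i.1 hiS) (not_le.2 (card_lt_card hss))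
        · exact hp'.2 I₀ hI₀F hss hx
      push_neg at hnot
      rw [if_neg hnot.1, if_neg hnot.2, sub_zero, mul_zero]
  have heval := congrFun hg (nL I₀)
  rw [Finset.sum_apply] at heval
  simp only [Pi.smul_apply, Pi.sub_apply, Pi.single_apply, smul_eq_mul, Pi.zero_apply] at heval
  rw [Fintype.sum_eq_single ⟨I₀, hI₀F⟩ hzero] at heval
  have hLR : nL I₀ ≠ nR I₀ := by
    intro h
    have := (hn I₀ hI₀F).2.1
    rw [mem_sdiff, ← h] at this
    exact this.2 hx
  rw [if_pos rfl, if_neg hLR, sub_zero, mul_one] at heval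
  exact hgI₀ heval

/-- A maximal commuting family on a `univ` of size at least two contains `univ`. -/
lemma myaux_univ_mem {α : Type*} [Fintype α] [DecidableEq α]
    {F : Finset (Finset α)} (hF : IsMaxCommFamOn Finset.univ F)
    (hcard : 1 < (Finset.univ : Finset α).card) : (Finset.univ : Finset α) ∈ F := by
  obtain ⟨⟨h1, h2, h3⟩, hmax⟩ := hF
  have hG : IsCommFamOn Finset.univ (insert Finset.univ F) := by
    refine ⟨fun I _ => subset_univ I, ?_, ?_⟩
    · intro I hI
      rcases mem_insert.1 hI with rfl | hI
      · exact hcard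
      · exact h2 I hI
    · intro I hI J hJ hne
      rcases mem_insert.1 hI with rfl | hI <;> rcases mem_insert.1 hJ with rfl | hJ
      · exact absurd rfl hne
      · exact Or.inr (Or.inr (Finset.ssubset_iff_subset_ne.2 ⟨subset_univ J, fun h => hne h.symm⟩))
      · exact Or.inr (Or.inl (Finset.ssubset_iff_subset_ne.2 ⟨subset_univ I, hne⟩))
      · exact h3 I hI J hJ hne
  have := hmax _ hG (subset_insert _ _)
  rw [← this]
  exact mem_insert_self _ _

/-- The linear forms `x_I = x_{n_I} - x_{n'_I}` attached to the games of a
tournament are linearly independent, and each `x_i - x_j` is an integral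
combination of them supported on the games `I ⊆ I_{i,j}`, with coefficient
`±1` at the minimal game `I_{i,j}` containing `i` and `j`. -/
theorem forms_linearIndependent {α : Type*} [Fintype α] [DecidableEq α]
    (F : Finset (Finset α)) (hF : IsMaxCommFamOn Finset.univ F)
    (b : Finset α → Finset α) (hb : IsLosingMap F b)
    (nL nR : Finset α → α)
    (hn : ∀ I ∈ F, nL I ∈ b I ∧ nR I ∈ I \ b I ∧
      I \ (F.filter (· ⊂ I)).biUnion b = {nL I, nR I}) :
    LinearIndependent ℂ
      (fun I : F => (Pi.single (nL I.1) 1 - Pi.single (nR I.1) 1 : α → ℂ)) ∧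
    ∀ i j : α, i ≠ j → ∃ Iij ∈ F, i ∈ Iij ∧ j ∈ Iij ∧
      (∀ J ∈ F, i ∈ J → j ∈ J → Iij ⊆ J) ∧
      ∃ ε : Finset α → ℤ,
        (Pi.single i 1 - Pi.single j 1 : α → ℂ) =
          (∑ I ∈ F, (ε I : ℂ) • (Pi.single (nL I) 1 - Pi.single (nR I) 1 : α → ℂ)) ∧
        (∀ I ∈ F, ¬ I ⊆ Iij → ε I = 0) ∧ (ε Iij = 1 ∨ ε Iij = -1) := by
  classical
  constructor
  · exact myaux_li hF.1.2.2 hn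
  · intro i j hij
    have hcardu : 1 < (Finset.univ : Finset α).card :=
      Finset.one_lt_card.2 ⟨i, mem_univ i, j, mem_univ j, hij⟩
    have huniv := myaux_univ_mem hF hcardu
    set S := F.filter (fun I => i ∈ I ∧ j ∈ I) with hSdef
    have hSne : S.Nonempty := ⟨Finset.univ, mem_filter.2 ⟨huniv, mem_univ i, mem_univ j⟩⟩
    obtain ⟨K, hKS, hKmin⟩ := S.exists_min_image card hSne
    obtain ⟨hK, hiK, hjK⟩ := mem_filter.1 hKS
    obtain ⟨hiK, hjK⟩ : i ∈ K ∧ j ∈ K := ⟨hiK, hjK⟩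
    refine ⟨K, hK, hiK, hjK, ?_, ?_⟩
    · intro J hJ hiJ hjJ
      by_cases hne : K = J
      · exact hne ▸ subset_rfl
      rcases hF.1.2.2 K hK J hJ hne with hd | hss | hss
      · exact absurd hiJ ((Finset.disjoint_left.1 hd) hiK)
      · exact hss.subset
      · exact absurd (hKmin J (mem_filter.2 ⟨hJ, hiJ, hjJ⟩)) (not_le.2 (card_lt_card hss))
    · obtain ⟨hbsub, hbne, hbneq, hbF, hbF'⟩ := hb K hK
      have hbssub : b K ⊂ K := Finset.ssubset_iff_subset_ne.2 ⟨hbsub, hbneq⟩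
      have honesplit : (i ∈ b K ∧ j ∉ b K) ∨ (j ∈ b K ∧ i ∉ b K) := by
        by_cases hi : i ∈ b K <;> by_cases hj : j ∈ b K
        · exfalso
          rcases hbF with hbFmem | hcard1
          · exact absurd (hKmin (b K) (mem_filter.2 ⟨hbFmem, hi, hj⟩))
              (not_le.2 (card_lt_card hbssub))
          · exact hij (Finset.card_le_one.1 (le_of_eq hcard1) i hi j hj)
        · exact Or.inl ⟨hi, hj⟩
        · exact Or.inr ⟨hj, hi⟩
        · exfalso
          have hi' : i ∈ K \ b K := mem_sdiff.2 ⟨hiK, hi⟩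
          have hj' : j ∈ K \ b K := mem_sdiff.2 ⟨hjK, hj⟩
          have hss : K \ b K ⊂ K := by
            refine Finset.ssubset_iff_subset_ne.2 ⟨sdiff_subset, fun h => ?_⟩
            obtain ⟨a, ha⟩ := hbne
            exact (mem_sdiff.1 (h.symm ▸ hbsub ha)).2 ha
          rcases hbF' with hbFmem | hcard1
          · exact absurd (hKmin (K \ b K) (mem_filter.2 ⟨hbFmem, hi', hj'⟩))
              (not_le.2 (card_lt_card hss))
          · exact hij (Finset.card_le_one.1 (le_of_eq hcard1) i hi' j hj')
      obtain ⟨ε₁, heq1, hsupp1, hval1⟩ := myaux_telescope hb hn K.card K hK le_rfl i hiK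
      obtain ⟨ε₂, heq2, hsupp2, hval2⟩ := myaux_telescope hb hn K.card K hK le_rfl j hjK
      refine ⟨fun I => ε₁ I - ε₂ I, ?_, ?_, ?_⟩
      · have hsplit : (Pi.single i 1 - Pi.single j 1 : α → ℂ) =
            (Pi.single i 1 - Pi.single (nR K) 1 : α → ℂ)
            - (Pi.single j 1 - Pi.single (nR K) 1 : α → ℂ) := by abel
        rw [hsplit, heq1, heq2, ← Finset.sum_sub_distrib]
        refine Finset.sum_congr rfl fun I _ => ?_
        push_cast
        rw [sub_smul]
      · intro I hIF h
        show ε₁ I - ε₂ I = 0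
        rw [hsupp1 I hIF h, hsupp2 I hIF h, sub_self]
      · rcases honesplit with ⟨h1, h2⟩ | ⟨h1, h2⟩
        · left; show ε₁ K - ε₂ K = 1; rw [hval1, hval2, if_pos h1, if_neg h2]; ring
        · right; show ε₁ K - ε₂ K = -1; rw [hval1, hval2, if_neg h2, if_pos h1]; ring
end

section
/- Let I be a maximal commuting family of L = {0,...,n-1} and fix a losing-side map b̄ as above. For each I ∈ I, the set I_b̄ := I \ ⋃_{J ∈ I, J ⊊ I} b̄(J) has exactly two elements. -/
/-
Each game `I` splits into the two sides `b I` and `I ∖ b I`, and laminarity forces every smaller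
game inside `I` to lie within one side. Hence the players of `I` are the players left unbeaten in
each side, and a side has exactly one unbeaten player: a singleton trivially, and a side `A ∈ F`
by induction on `#A`, since the unbeaten players of `A` are those of its winning side `A ∖ b A`.
-/

open Finset

def unbeaten {α : Type*} [DecidableEq α] (F : Finset (Finset α)) (b : Finset α → Finset α)
    (A : Finset α) : Finset α :=
  A \ (F.filter (· ⊆ A)).biUnion b

def players {α : Type*} [DecidableEq α] (F : Finset (Finset α)) (b : Finset α → Finset α)
    (I : Finset α) : Finset α :=
  I \ (F.filter (· ⊂ I)).biUnion b

section

variable {α : Type*} [DecidableEq α] {L : Finset α} {F : Finset (Finset α)}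
  {b : Finset α → Finset α}

lemma IsCommFamOn.subset_of_not_disjoint_of_not_subset (hF : IsCommFamOn L F) {X J : Finset α}
    (hX : X ∈ F ∨ #X = 1) (hJ : J ∈ F) (hmeet : ¬ Disjoint J X) (hout : ¬ J ⊆ X) : X ⊆ J := by
  rcases hX with hXF | hX1
  · have hJX : J ≠ X := by rintro rfl; exact hout subset_rfl
    rcases hF.2.2 J hJ X hXF hJX with hdisj | hJX | hXJ
    · exact absurd hdisj hmeet
    · exact absurd hJX.1 hout
    · exact hXJ.1
  · obtain ⟨a, rfl⟩ := card_eq_one.mp hX1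
    simpa using hmeet

lemma IsCommFamOn.subset_or_subset_sdiff (hF : IsCommFamOn L F) (hb : IsLosingMap F b)
    {I J : Finset α} (hI : I ∈ F) (hJ : J ∈ F) (hJI : J ⊂ I) :
    J ⊆ b I ∨ J ⊆ I \ b I := by
  -- a game meeting both sides would contain both of them, hence all of `I`
  obtain ⟨-, -, -, hlose, hwin⟩ := hb I hI
  by_contra! ⟨hnot_lose, hnot_win⟩
  have hmeet_lose : ¬ Disjoint J (b I) := fun h => hnot_win (subset_sdiff.mpr ⟨hJI.1, h⟩)
  have hmeet_win : ¬ Disjoint J (I \ b I) := fun h =>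
    hnot_lose fun x hxJ => by_contra fun hx => disjoint_left.mp h hxJ (mem_sdiff.mpr ⟨hJI.1 hxJ, hx⟩)
  have hlose_sub := hF.subset_of_not_disjoint_of_not_subset hlose hJ hmeet_lose hnot_lose
  have hwin_sub := hF.subset_of_not_disjoint_of_not_subset hwin hJ hmeet_win hnot_win
  exact hJI.2 fun x hxI => by
    by_cases hx : x ∈ b I
    · exact hlose_sub hx
    · exact hwin_sub (mem_sdiff.mpr ⟨hxI, hx⟩)

lemma players_inter_eq_unbeaten (hbF : ∀ J ∈ F, b J ⊆ J) {I S : Finset α} (hSI : S ⊂ I)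
    (hsplit : ∀ J ∈ F, J ⊂ I → J ⊆ S ∨ Disjoint J S) :
    players F b I ∩ S = unbeaten F b S := by
  ext x
  simp only [players, unbeaten, mem_inter, mem_sdiff, mem_biUnion, mem_filter, not_exists, not_and]
  constructor
  · rintro ⟨⟨-, hx⟩, hxS⟩
    exact ⟨hxS, fun J ⟨hJ, hJS⟩ => hx J ⟨hJ, lt_of_le_of_lt hJS hSI⟩⟩
  · rintro ⟨hxS, hx⟩
    refine ⟨⟨hSI.1 hxS, fun J ⟨hJ, hJI⟩ hxJ => ?_⟩, hxS⟩
    rcases hsplit J hJ hJI with hJS | hdisj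
    · exact hx J ⟨hJ, hJS⟩ hxJ
    · exact disjoint_left.mp hdisj (hbF J hJ hxJ) hxS

lemma players_subset (I : Finset α) : players F b I ⊆ I :=
  sdiff_subset

lemma players_sdiff_eq_inter (X : Finset α) {I : Finset α} :
    players F b I \ X = players F b I ∩ (I \ X) := by
  rw [← inter_sdiff_assoc, inter_eq_left.mpr (players_subset I)]

lemma players_inter_lose_eq (hF : IsCommFamOn L F) (hb : IsLosingMap F b) {I : Finset α}
    (hI : I ∈ F) : players F b I ∩ b I = unbeaten F b (b I) := by
  obtain ⟨hsub, -, hne, -⟩ := hb I hI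
  refine players_inter_eq_unbeaten (fun J hJ => (hb J hJ).1) (ssubset_of_subset_of_ne hsub hne)
    fun J hJ hJI => (hF.subset_or_subset_sdiff hb hI hJ hJI).imp_right fun h => (subset_sdiff.mp h).2

lemma players_inter_win_eq (hF : IsCommFamOn L F) (hb : IsLosingMap F b) {I : Finset α}
    (hI : I ∈ F) : players F b I ∩ (I \ b I) = unbeaten F b (I \ b I) := by
  obtain ⟨hsub, hnonempty, -⟩ := hb I hI
  refine players_inter_eq_unbeaten (fun J hJ => (hb J hJ).1) (sdiff_ssubset hsub hnonempty)
    fun J hJ hJI => (hF.subset_or_subset_sdiff hb hI hJ hJI).symm.imp_right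
      fun h => disjoint_of_subset_left h disjoint_sdiff

lemma unbeaten_eq_players_sdiff {A : Finset α} (hA : A ∈ F) :
    unbeaten F b A = players F b A \ b A := by
  ext x
  simp only [players, unbeaten, mem_sdiff, mem_biUnion, mem_filter, not_exists, not_and]
  constructor
  · rintro ⟨hxA, hx⟩
    exact ⟨⟨hxA, fun J ⟨hJ, hJA⟩ => hx J ⟨hJ, hJA.1⟩⟩, hx A ⟨hA, subset_rfl⟩⟩
  · rintro ⟨⟨hxA, hx⟩, hxb⟩
    refine ⟨hxA, fun J ⟨hJ, hJA⟩ => ?_⟩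
    rcases eq_or_ne J A with rfl | hne
    · exact hxb
    · exact hx J ⟨hJ, ssubset_of_subset_of_ne hJA hne⟩

lemma unbeaten_eq_unbeaten_sdiff (hF : IsCommFamOn L F) (hb : IsLosingMap F b) {A : Finset α}
    (hA : A ∈ F) : unbeaten F b A = unbeaten F b (A \ b A) := by
  rw [unbeaten_eq_players_sdiff hA, players_sdiff_eq_inter, players_inter_win_eq hF hb hA]

lemma unbeaten_eq_self_of_card_eq_one (hF : IsCommFamOn L F) {X : Finset α} (hX : #X = 1) :
    unbeaten F b X = X := by
  have hnone : F.filter (· ⊆ X) = ∅ :=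
    filter_eq_empty_iff.mpr fun J hJ hJX => by
      have := card_le_card hJX
      have := hF.2.1 J hJ
      omega
  rw [unbeaten, hnone, biUnion_empty, sdiff_empty]

lemma card_unbeaten (hF : IsCommFamOn L F) (hb : IsLosingMap F b) {X : Finset α}
    (hX : X ∈ F ∨ #X = 1) : #(unbeaten F b X) = 1 := by
  induction hn : #X using Nat.strong_induction_on generalizing X with
  | _ n ih =>
    rcases hX with hXF | hX1
    · obtain ⟨hsub, hnonempty, -, -, hwin⟩ := hb X hXF
      rw [unbeaten_eq_unbeaten_sdiff hF hb hXF]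
      exact ih _ (hn ▸ card_lt_card (sdiff_ssubset hsub hnonempty)) hwin rfl
    · rw [unbeaten_eq_self_of_card_eq_one hF hX1, hX1]

end

/-- For each game `I` of the tournament, the set
`I_b̄ = I ∖ ⋃_{J ∈ F, J ⊊ I} b̄(J)` of its two players has exactly two elements. -/
theorem players_card_two {α : Type*} [DecidableEq α] (L : Finset α)
    (F : Finset (Finset α)) (hF : IsMaxCommFamOn L F)
    (b : Finset α → Finset α) (hb : IsLosingMap F b) :
    ∀ I ∈ F, (I \ (F.filter (· ⊂ I)).biUnion b).card = 2 := by
  intro I hI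
  obtain ⟨-, -, -, hlose, hwin⟩ := hb I hI
  change #(players F b I) = 2
  rw [← card_inter_add_card_sdiff _ (b I), players_sdiff_eq_inter,
    players_inter_lose_eq hF.1 hb hI, players_inter_win_eq hF.1 hb hI,
    card_unbeaten hF.1 hb hlose, card_unbeaten hF.1 hb hwin]
end

section
/- Let A_{ij} ∈ M(N,ℂ) satisfy the KZ integrability conditions for indices in L_n = {0,...,n-1}, let μ ∈ ℂ, and define the convolution matrices à_I ∈ M((n-1)N, ℂ) as in Dettweiler–Reiter–Haraoka. Then for a subset I ⊆ L_n^0 = {1,...,n-1} with |I| ≥ 2, the multiset of generalized eigenvalues satisfies [Ã_I] = [A_I]_{n-|I|} ∪ [A_{0I} ]_{|I|-1}, i.e., the characteristic polynomial of Ã_I equals char(A_I)^{n-|I|} · char(A_{I∪{0}})^{|I|-1} up to this block structure; concretely, via the block description, Ã_I is block-conjugate to a block-triangular matrix with n-|I| diagonal blocks equal to A_I and |I|-1 diagonal blocks equal to A_{I∪{0}}. -/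
open Finset Matrix

/-- The Haraoka convolution block matrix `Ã_{ij}` for `1 ≤ i < j ≤ n-1`
(here `i j : Fin m` with `m = n-1` label the nonzero points `i+1, j+1`):
block diagonal `A_{ij}` except for the four blocks in rows/columns `i, j`. -/
noncomputable def tAfin {m N : ℕ}
    (A : Fin (m + 1) → Fin (m + 1) → Matrix (Fin N) (Fin N) ℂ) (i j : Fin m) :
    Matrix (Fin m × Fin N) (Fin m × Fin N) ℂ :=
  Matrix.of fun x y =>
    (if x.1 = i ∧ y.1 = i then (A i.succ j.succ + A 0 j.succ) x.2 y.2 else 0) +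
    (if x.1 = i ∧ y.1 = j then (-(A 0 j.succ)) x.2 y.2 else 0) +
    (if x.1 = j ∧ y.1 = i then (-(A 0 i.succ)) x.2 y.2 else 0) +
    (if x.1 = j ∧ y.1 = j then (A i.succ j.succ + A 0 i.succ) x.2 y.2 else 0) +
    (if x.1 = y.1 ∧ x.1 ≠ i ∧ x.1 ≠ j then (A i.succ j.succ) x.2 y.2 else 0)

/-- The Dettweiler–Reiter convolution block matrix `Ã_{0k}`:
its `k`-th block row is `(A_{01}, …, A_{0k} + μ, …, A_{0,n-1})`, zero elsewhere. -/
noncomputable def tA0 {m N : ℕ}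
    (A : Fin (m + 1) → Fin (m + 1) → Matrix (Fin N) (Fin N) ℂ) (μ : ℂ) (k : Fin m) :
    Matrix (Fin m × Fin N) (Fin m × Fin N) ℂ :=
  Matrix.of fun x y =>
    if x.1 = k then
      (A 0 y.1.succ + if y.1 = k then μ • (1 : Matrix (Fin N) (Fin N) ℂ) else 0) x.2 y.2
    else 0

/-- `Ã_I = ∑_{{p,q} ⊆ I} Ã_{pq}` for `I ⊆ L_n^0 = {1,…,n-1}`. -/
noncomputable def tRes {m N : ℕ}
    (A : Fin (m + 1) → Fin (m + 1) → Matrix (Fin N) (Fin N) ℂ) (I : Finset (Fin m)) :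
    Matrix (Fin m × Fin N) (Fin m × Fin N) ℂ :=
  ∑ p ∈ I, ∑ q ∈ I.filter (fun q => p < q), tAfin A p q

namespace TResAux

noncomputable def blockOf {m N : ℕ} (f : Fin m → Fin m → Matrix (Fin N) (Fin N) ℂ) :
    Matrix (Fin m × Fin N) (Fin m × Fin N) ℂ :=
  Matrix.of fun x y => f x.1 y.1 x.2 y.2

variable {m N : ℕ}

lemma blockOf_mul (f g : Fin m → Fin m → Matrix (Fin N) (Fin N) ℂ) :
    blockOf f * blockOf g = blockOf fun x y => ∑ z, f x z * g z y := by
  ext ⟨x, a⟩ ⟨y, b⟩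
  simp only [blockOf, Matrix.of_apply, Matrix.mul_apply, Fintype.sum_prod_type,
    Matrix.sum_apply]

lemma blockOf_sum {α : Type*} (s : Finset α)
    (f : α → Fin m → Fin m → Matrix (Fin N) (Fin N) ℂ) :
    ∑ i ∈ s, blockOf (f i) = blockOf fun x y => ∑ i ∈ s, f i x y := by
  ext ⟨x, a⟩ ⟨y, b⟩
  simp [blockOf, Matrix.sum_apply, Finset.sum_apply]

lemma blockOf_one :
    blockOf (fun x y : Fin m => if x = y then (1 : Matrix (Fin N) (Fin N) ℂ) else 0) = 1 := by
  ext ⟨x, a⟩ ⟨y, b⟩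
  by_cases h : x = y <;> by_cases h2 : a = b <;>
    simp [blockOf, Matrix.one_apply, Prod.ext_iff, h, h2]

noncomputable def Cfun (A : Fin (m + 1) → Fin (m + 1) → Matrix (Fin N) (Fin N) ℂ)
    (p q : Fin m) (x y : Fin m) : Matrix (Fin N) (Fin N) ℂ :=
  if x = y then A p.succ q.succ +
    (if x = p then A 0 q.succ else if x = q then A 0 p.succ else 0)
  else if x = p ∧ y = q then -(A 0 q.succ)
  else if x = q ∧ y = p then -(A 0 p.succ) else 0

lemma tAfin_eq (A : Fin (m + 1) → Fin (m + 1) → Matrix (Fin N) (Fin N) ℂ)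
    (p q : Fin m) (hpq : p ≠ q) :
    tAfin A p q = blockOf (Cfun A p q) := by
  ext ⟨x, a⟩ ⟨y, b⟩
  simp only [tAfin, blockOf, Cfun, Matrix.of_apply]
  by_cases hxp : x = p <;> by_cases hxq : x = q <;>
    by_cases hyp : y = p <;> by_cases hyq : y = q <;> by_cases hxy : x = y <;>
    simp_all [Matrix.add_apply, Matrix.neg_apply]


lemma filter_split (I : Finset (Fin m)) (x : Fin m) (hx : x ∈ I)
    (f : Fin m → Matrix (Fin N) (Fin N) ℂ) :
    ∑ q ∈ I.filter (fun q => x < q), f q + ∑ q ∈ I.filter (fun q => q < x), f q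
      = (∑ q ∈ I, f q) - f x := by
  rw [← Finset.sum_erase_eq_sub hx,
    ← Finset.sum_filter_add_sum_filter_not (I.erase x) (fun q => x < q) f]
  congr 1
  · congr 1
    ext q
    simp only [Finset.mem_filter, Finset.mem_erase]
    constructor
    · rintro ⟨hq, hlt⟩; exact ⟨⟨(ne_of_gt hlt), hq⟩, hlt⟩
    · rintro ⟨⟨_, hq⟩, hlt⟩; exact ⟨hq, hlt⟩
  · congr 1
    ext q
    simp only [Finset.mem_filter, Finset.mem_erase]
    constructor
    · rintro ⟨hq, hlt⟩; exact ⟨⟨ne_of_lt hlt, hq⟩, not_lt.2 (le_of_lt hlt)⟩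
    · rintro ⟨⟨hne, hq⟩, hnlt⟩; exact ⟨hq, lt_of_le_of_ne (not_lt.1 hnlt) hne⟩

noncomputable def Bblk (A : Fin (m + 1) → Fin (m + 1) → Matrix (Fin N) (Fin N) ℂ)
    (I : Finset (Fin m)) (x y : Fin m) : Matrix (Fin N) (Fin N) ℂ :=
  if x = y then
    resSum (fun p q => A p.succ q.succ) I +
      (if x ∈ I then (∑ q ∈ I, A 0 q.succ) - A 0 x.succ else 0)
  else if x ∈ I ∧ y ∈ I then -(A 0 y.succ) else 0

lemma sum_Cfun (A : Fin (m + 1) → Fin (m + 1) → Matrix (Fin N) (Fin N) ℂ)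
    (I : Finset (Fin m)) (x y : Fin m) :
    ∑ p ∈ I, ∑ q ∈ I.filter (fun q => p < q), Cfun A p q x y = Bblk A I x y := by
  by_cases hxy : x = y
  · subst hxy
    have step : ∀ p ∈ I, ∀ q ∈ I.filter (fun q => p < q),
        Cfun A p q x x = A p.succ q.succ +
          ((if x = p then A 0 q.succ else 0) + (if x = q then A 0 p.succ else 0)) := by
      intro p hp q hq
      have hpq : p ≠ q := (Finset.mem_filter.1 hq).2.ne
      simp only [Cfun, if_pos rfl]
      by_cases h1 : x = p <;> by_cases h2 : x = q <;> simp_all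
    rw [Finset.sum_congr rfl fun p hp => Finset.sum_congr rfl (step p hp)]
    simp only [Finset.sum_add_distrib]
    have e1 : ∀ p : Fin m, (∑ q ∈ I.filter (fun q => p < q),
        (if x = p then A 0 q.succ else 0))
        = if x = p then ∑ q ∈ I.filter (fun q => x < q), A 0 q.succ else 0 := by
      intro p
      by_cases h : x = p
      · subst h; simp
      · simp [h]
    have e2 : ∀ p : Fin m, (∑ q ∈ I.filter (fun q => p < q),
        (if x = q then A 0 p.succ else 0))
        = if x ∈ I ∧ p < x then A 0 p.succ else 0 := by
      intro p
      rw [Finset.sum_ite_eq (I.filter (fun q => p < q)) x (fun _ => A 0 p.succ)]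
      simp [Finset.mem_filter]
    simp only [e1, e2]
    rw [Finset.sum_ite_eq I x (fun _ => ∑ q ∈ I.filter (fun q => x < q), A 0 q.succ)]
    by_cases hx : x ∈ I
    · simp only [hx, if_true, true_and, Bblk, if_pos rfl]
      have : (∑ p ∈ I, if p < x then A 0 p.succ else 0)
          = ∑ p ∈ I.filter (fun p => p < x), A 0 p.succ := (Finset.sum_filter _ _).symm
      rw [this, filter_split I x hx (fun q => A 0 q.succ)]
      rfl
    · simp [hx, Bblk, resSum]
  · have step : ∀ p ∈ I, ∀ q ∈ I.filter (fun q => p < q),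
        Cfun A p q x y = (if x = p ∧ y = q then -(A 0 q.succ) else 0) +
          (if x = q ∧ y = p then -(A 0 p.succ) else 0) := by
      intro p hp q hq
      have hpq : p ≠ q := (Finset.mem_filter.1 hq).2.ne
      simp only [Cfun, if_neg hxy]
      by_cases h1 : x = p <;> by_cases h2 : y = q <;> by_cases h3 : x = q <;>
        by_cases h4 : y = p <;> simp_all
    rw [Finset.sum_congr rfl fun p hp => Finset.sum_congr rfl (step p hp)]
    simp only [Finset.sum_add_distrib]
    have e1 : ∀ p : Fin m, (∑ q ∈ I.filter (fun q => p < q),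
        (if x = p ∧ y = q then -(A 0 q.succ) else 0))
        = if x = p then (if y ∈ I ∧ p < y then -(A 0 y.succ) else 0) else 0 := by
      intro p
      by_cases h : x = p
      · simp only [h, true_and]
        rw [Finset.sum_ite_eq (I.filter (fun q => p < q)) y (fun q => -(A 0 q.succ))]
        simp [Finset.mem_filter]
      · simp [h]
    have e2 : ∀ p : Fin m, (∑ q ∈ I.filter (fun q => p < q),
        (if x = q ∧ y = p then -(A 0 p.succ) else 0))
        = if y = p then (if x ∈ I ∧ p < x then -(A 0 p.succ) else 0) else 0 := by
      intro p
      by_cases h : y = p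
      · simp only [h, and_true]
        rw [Finset.sum_ite_eq (I.filter (fun q => p < q)) x (fun _ => -(A 0 p.succ))]
        simp [Finset.mem_filter]
      · simp [h]
    simp only [e1, e2]
    rw [Finset.sum_ite_eq I x (fun p => if y ∈ I ∧ p < y then -(A 0 y.succ) else 0),
      Finset.sum_ite_eq I y (fun p => if x ∈ I ∧ p < x then -(A 0 p.succ) else 0)]
    by_cases hx : x ∈ I <;> by_cases hy : y ∈ I
    · rcases lt_or_gt_of_ne hxy with h | h
      · simp [Bblk, hxy, hx, hy, h, lt_asymm h]
      · simp [Bblk, hxy, hx, hy, h, lt_asymm h]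
    all_goals simp [Bblk, hxy, hx, hy]

lemma tRes_eq (A : Fin (m + 1) → Fin (m + 1) → Matrix (Fin N) (Fin N) ℂ)
    (I : Finset (Fin m)) :
    tRes A I = blockOf (Bblk A I) := by
  rw [tRes]
  rw [Finset.sum_congr rfl fun p hp => Finset.sum_congr rfl fun q hq =>
    tAfin_eq A p q (Finset.mem_filter.1 hq).2.ne]
  simp only [blockOf_sum]
  have : (fun x y => ∑ p ∈ I, ∑ q ∈ I.filter (fun q => p < q), Cfun A p q x y)
      = Bblk A I := by
    funext x y; exact sum_Cfun A I x y
  rw [this]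


noncomputable def ps (I : Finset (Fin m)) (t : Fin m) (x y : Fin m) : ℂ :=
  if x = y then 1 else if y = t ∧ x ∈ I then 1 else 0

noncomputable def qs (I : Finset (Fin m)) (t : Fin m) (x y : Fin m) : ℂ :=
  if x = y then 1 else if y = t ∧ x ∈ I then -1 else 0

lemma ps_t (I : Finset (Fin m)) (t y : Fin m) :
    ps I t t y = if t = y then 1 else 0 := by
  by_cases h : t = y
  · simp [ps, h]
  · simp [ps, h, show ¬y = t from fun hh => h hh.symm]

lemma qs_t (I : Finset (Fin m)) (t y : Fin m) :
    qs I t t y = if t = y then 1 else 0 := by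
  by_cases h : t = y
  · simp [qs, h]
  · simp [qs, h, show ¬y = t from fun hh => h hh.symm]

lemma sum_qs_ps (I : Finset (Fin m)) (t : Fin m) (x y : Fin m) :
    ∑ z, qs I t x z * ps I t z y = if x = y then 1 else 0 := by
  have hq : ∀ z, qs I t x z = (if x = z then 1 else 0) +
      (if z = t ∧ x ∈ I ∧ x ≠ t then (-1 : ℂ) else 0) := by
    intro z
    simp only [qs]
    by_cases h1 : x = z <;> by_cases h2 : z = t <;> by_cases h3 : x ∈ I <;>
      simp_all
  simp only [hq, add_mul, Finset.sum_add_distrib, ite_mul, one_mul, zero_mul, neg_mul]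
  rw [Finset.sum_ite_eq Finset.univ x (fun z => ps I t z y)]
  have e2 : (∑ z, if z = t ∧ x ∈ I ∧ x ≠ t then -(ps I t z y) else 0)
      = if x ∈ I ∧ x ≠ t then -(ps I t t y) else 0 := by
    by_cases hC : x ∈ I ∧ x ≠ t
    · simp only [show ∀ z : Fin m, (z = t ∧ x ∈ I ∧ x ≠ t) ↔ z = t from
        fun z => by simp [hC.1, hC.2]]
      rw [Finset.sum_ite_eq' Finset.univ t (fun z => -(ps I t z y)), if_pos hC]
      simp
    · simp [hC]
  rw [e2]
  simp only [Finset.mem_univ, if_true]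
  by_cases hC : x ∈ I ∧ x ≠ t
  · rw [if_pos hC, ps_t]
    by_cases h1 : x = y
    · subst h1
      rw [if_neg (fun h => hC.2 h.symm)]
      simp [ps]
    · rw [if_neg h1]
      by_cases h2 : y = t
      · subst h2
        rw [if_pos rfl]
        simp [ps, h1, hC.1]
      · rw [if_neg (fun h => h2 h.symm)]
        simp [ps, h1, h2]
  · rw [if_neg hC, add_zero]
    by_cases h1 : x = y
    · simp [ps, h1]
    · rw [if_neg h1]
      simp only [ps, if_neg h1]
      rw [if_neg ?_]
      rintro ⟨rfl, hxI⟩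
      have hx : x = y := not_not.1 (fun hne => hC ⟨hxI, hne⟩)
      exact h1 hx

lemma sum_ps_qs (I : Finset (Fin m)) (t : Fin m) (x y : Fin m) :
    ∑ z, ps I t x z * qs I t z y = if x = y then 1 else 0 := by
  have hp : ∀ z, ps I t x z = (if x = z then 1 else 0) +
      (if z = t ∧ x ∈ I ∧ x ≠ t then (1 : ℂ) else 0) := by
    intro z
    simp only [ps]
    by_cases h1 : x = z <;> by_cases h2 : z = t <;> by_cases h3 : x ∈ I <;>
      simp_all
  simp only [hp, add_mul, Finset.sum_add_distrib, ite_mul, one_mul, zero_mul]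
  rw [Finset.sum_ite_eq Finset.univ x (fun z => qs I t z y)]
  have e2 : (∑ z, if z = t ∧ x ∈ I ∧ x ≠ t then qs I t z y else 0)
      = if x ∈ I ∧ x ≠ t then qs I t t y else 0 := by
    by_cases hC : x ∈ I ∧ x ≠ t
    · simp only [show ∀ z : Fin m, (z = t ∧ x ∈ I ∧ x ≠ t) ↔ z = t from
        fun z => by simp [hC.1, hC.2]]
      rw [Finset.sum_ite_eq' Finset.univ t (fun z => qs I t z y), if_pos hC]
      simp
    · simp [hC]
  rw [e2]
  simp only [Finset.mem_univ, if_true]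
  by_cases hC : x ∈ I ∧ x ≠ t
  · rw [if_pos hC, qs_t]
    by_cases h1 : x = y
    · subst h1
      rw [if_neg (fun h => hC.2 h.symm)]
      simp [qs]
    · rw [if_neg h1]
      by_cases h2 : y = t
      · subst h2
        rw [if_pos rfl]
        simp [qs, h1, hC.1]
      · rw [if_neg (fun h => h2 h.symm)]
        simp [qs, h1, h2]
  · rw [if_neg hC, add_zero]
    by_cases h1 : x = y
    · simp [qs, h1]
    · rw [if_neg h1]
      simp only [qs, if_neg h1]
      rw [if_neg ?_]
      rintro ⟨rfl, hxI⟩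
      have hx : x = y := not_not.1 (fun hne => hC ⟨hxI, hne⟩)
      exact h1 hx

noncomputable def Pmat (I : Finset (Fin m)) (t : Fin m) :
    Matrix (Fin m × Fin N) (Fin m × Fin N) ℂ :=
  blockOf fun x y => ps I t x y • (1 : Matrix (Fin N) (Fin N) ℂ)

noncomputable def Qmat (I : Finset (Fin m)) (t : Fin m) :
    Matrix (Fin m × Fin N) (Fin m × Fin N) ℂ :=
  blockOf fun x y => qs I t x y • (1 : Matrix (Fin N) (Fin N) ℂ)

lemma Qmat_mul_Pmat (I : Finset (Fin m)) (t : Fin m) :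
    (Qmat I t : Matrix (Fin m × Fin N) (Fin m × Fin N) ℂ) * Pmat I t = 1 := by
  rw [Qmat, Pmat, blockOf_mul]
  have : (fun x y => ∑ z, (qs I t x z • (1 : Matrix (Fin N) (Fin N) ℂ)) *
      (ps I t z y • 1)) = fun x y : Fin m =>
        if x = y then (1 : Matrix (Fin N) (Fin N) ℂ) else 0 := by
    funext x y
    have : ∀ z, (qs I t x z • (1 : Matrix (Fin N) (Fin N) ℂ)) * (ps I t z y • 1)
        = (qs I t x z * ps I t z y) • (1 : Matrix (Fin N) (Fin N) ℂ) := by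
      intro z
      rw [Matrix.smul_mul, Matrix.mul_smul, smul_smul, Matrix.mul_one]
    simp only [this, ← Finset.sum_smul, sum_qs_ps]
    by_cases h : x = y <;> simp [h]
  rw [this, blockOf_one]

lemma Pmat_mul_Qmat (I : Finset (Fin m)) (t : Fin m) :
    (Pmat I t : Matrix (Fin m × Fin N) (Fin m × Fin N) ℂ) * Qmat I t = 1 := by
  rw [Qmat, Pmat, blockOf_mul]
  have : (fun x y => ∑ z, (ps I t x z • (1 : Matrix (Fin N) (Fin N) ℂ)) *
      (qs I t z y • 1)) = fun x y : Fin m =>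
        if x = y then (1 : Matrix (Fin N) (Fin N) ℂ) else 0 := by
    funext x y
    have : ∀ z, (ps I t x z • (1 : Matrix (Fin N) (Fin N) ℂ)) * (qs I t z y • 1)
        = (ps I t x z * qs I t z y) • (1 : Matrix (Fin N) (Fin N) ℂ) := by
      intro z
      rw [Matrix.smul_mul, Matrix.mul_smul, smul_smul, Matrix.mul_one]
    simp only [this, ← Finset.sum_smul, sum_ps_qs]
    by_cases h : x = y <;> simp [h]
  rw [this, blockOf_one]


noncomputable def Dblk (A : Fin (m + 1) → Fin (m + 1) → Matrix (Fin N) (Fin N) ℂ)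
    (I : Finset (Fin m)) (t : Fin m) (x y : Fin m) : Matrix (Fin N) (Fin N) ℂ :=
  if x = y then
    (if x ∈ I ∧ x ≠ t then
      resSum (fun p q => A p.succ q.succ) I + ∑ q ∈ I, A 0 q.succ
     else resSum (fun p q => A p.succ q.succ) I)
  else if x = t ∧ y ∈ I then -(A 0 y.succ) else 0

lemma sum_ps_right (I : Finset (Fin m)) (t : Fin m)
    (M : Fin m → Matrix (Fin N) (Fin N) ℂ) (y : Fin m) :
    ∑ z, ps I t z y • M z = M y + (if y = t then ∑ z ∈ I.erase t, M z else 0) := by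
  have hp : ∀ z, ps I t z y • M z = (if z = y then M z else 0) +
      (if y = t ∧ z ∈ I.erase t then M z else 0) := by
    intro z
    simp only [ps, Finset.mem_erase]
    by_cases h1 : z = y <;> by_cases h2 : y = t <;> by_cases h3 : z ∈ I <;>
      by_cases h4 : z = t <;> simp_all
  simp only [hp, Finset.sum_add_distrib]
  rw [Finset.sum_ite_eq' Finset.univ y M]
  congr 1
  · simp
  · by_cases hy : y = t
    · simp only [hy, true_and, if_true]
      rw [Finset.sum_ite_mem, Finset.univ_inter]
    · simp [hy]

lemma sum_ps_left (I : Finset (Fin m)) (t : Fin m)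
    (M : Fin m → Matrix (Fin N) (Fin N) ℂ) (x : Fin m) :
    ∑ z, ps I t x z • M z = M x + (if x ∈ I ∧ x ≠ t then M t else 0) := by
  have hp : ∀ z, ps I t x z • M z = (if z = x then M z else 0) +
      (if z = t ∧ x ∈ I ∧ x ≠ t then M z else 0) := by
    intro z
    simp only [ps]
    by_cases h1 : x = z <;> by_cases h2 : z = t <;> by_cases h3 : x ∈ I <;>
      by_cases h4 : x = t <;> simp_all [eq_comm]
  simp only [hp, Finset.sum_add_distrib]
  rw [Finset.sum_ite_eq' Finset.univ x M]
  congr 1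
  · simp
  · by_cases hC : x ∈ I ∧ x ≠ t
    · simp only [show ∀ z : Fin m, (z = t ∧ x ∈ I ∧ x ≠ t) ↔ z = t from
        fun z => by simp [hC.1, hC.2]]
      rw [Finset.sum_ite_eq' Finset.univ t M, if_pos hC]
      simp
    · have hz : ∀ z : Fin m, (if z = t ∧ x ∈ I ∧ x ≠ t then M z else 0) = 0 :=
        fun z => if_neg (fun h => hC ⟨h.2.1, h.2.2⟩)
      simp only [hz, Finset.sum_const_zero]
      rw [if_neg hC]

lemma sum_erase_Bblk (A : Fin (m + 1) → Fin (m + 1) → Matrix (Fin N) (Fin N) ℂ)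
    (I : Finset (Fin m)) (t : Fin m) (ht : t ∈ I) (x : Fin m) :
    ∑ z ∈ I.erase t, Bblk A I x z =
      if x ∈ I then
        (if x = t then -((∑ q ∈ I, A 0 q.succ) - A 0 t.succ)
         else resSum (fun p q => A p.succ q.succ) I + A 0 t.succ)
      else 0 := by
  by_cases hx : x ∈ I
  · by_cases hxt : x = t
    · subst hxt
      rw [if_pos hx, if_pos rfl]
      have : ∀ z ∈ I.erase x, Bblk A I x z = -(A 0 z.succ) := by
        intro z hz
        rw [Finset.mem_erase] at hz
        rw [Bblk, if_neg (fun h => hz.1 h.symm), if_pos ⟨hx, hz.2⟩]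
      rw [Finset.sum_congr rfl this, Finset.sum_neg_distrib, Finset.sum_erase_eq_sub hx]
    · rw [if_pos hx, if_neg hxt]
      have hxe : x ∈ I.erase t := Finset.mem_erase.2 ⟨hxt, hx⟩
      rw [← Finset.add_sum_erase (I.erase t) (Bblk A I x) hxe]
      have : ∀ z ∈ (I.erase t).erase x, Bblk A I x z = -(A 0 z.succ) := by
        intro z hz
        rw [Finset.mem_erase] at hz
        have hz2 := Finset.mem_erase.1 hz.2
        rw [Bblk, if_neg (fun h => hz.1 h.symm), if_pos ⟨hx, hz2.2⟩]
      rw [Finset.sum_congr rfl this, Finset.sum_neg_distrib]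
      rw [Finset.sum_erase_eq_sub hxe, Finset.sum_erase_eq_sub ht]
      rw [Bblk, if_pos rfl, if_pos hx]
      abel
  · rw [if_neg hx]
    apply Finset.sum_eq_zero
    intro z hz
    rw [Finset.mem_erase] at hz
    have hzx : x ≠ z := fun h => hx (h ▸ hz.2)
    rw [Bblk, if_neg hzx, if_neg (fun h => hx h.1)]

lemma key_cases (A : Fin (m + 1) → Fin (m + 1) → Matrix (Fin N) (Fin N) ℂ)
    (I : Finset (Fin m)) (t : Fin m) (ht : t ∈ I) (x y : Fin m) :
    Bblk A I x y + (if y = t then ∑ z ∈ I.erase t, Bblk A I x z else 0)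
      = Dblk A I t x y + (if x ∈ I ∧ x ≠ t then Dblk A I t t y else 0) := by
  rw [sum_erase_Bblk A I t ht x]
  by_cases hx : x ∈ I <;> by_cases hxt : x = t <;> by_cases hyt : y = t <;>
    by_cases hxy : x = y <;> by_cases hy : y ∈ I <;>
    simp only [Bblk, Dblk] <;> (try subst_vars) <;> (try simp_all) <;>
    (try rw [if_neg (show ¬t = y from fun h => hyt h.symm)]) <;>
    (try rw [if_neg (show ¬t = y from fun h => hxt h.symm)]) <;>
    (try simp_all) <;> (try abel) <;> (try (intro h; exact absurd h.symm hyt))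


lemma resSum_image (A : Fin (m + 1) → Fin (m + 1) → Matrix (Fin N) (Fin N) ℂ)
    (I : Finset (Fin m)) :
    resSum A (I.image Fin.succ) = resSum (fun p q => A p.succ q.succ) I := by
  rw [resSum, resSum]
  rw [Finset.sum_image (fun a _ b _ h => Fin.succ_injective _ h)]
  refine Finset.sum_congr rfl fun p hp => ?_
  have : (I.image Fin.succ).filter (fun q => p.succ < q)
      = (I.filter (fun q => p < q)).image Fin.succ := by
    rw [Finset.filter_image]
    congr 1
    ext q
    simp [Fin.succ_lt_succ_iff]
  rw [this, Finset.sum_image (fun a _ b _ h => Fin.succ_injective _ h)]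

lemma resSum_insert_zero (A : Fin (m + 1) → Fin (m + 1) → Matrix (Fin N) (Fin N) ℂ)
    (I : Finset (Fin m)) :
    resSum A (insert 0 (I.image Fin.succ))
      = resSum (fun p q => A p.succ q.succ) I + ∑ q ∈ I, A 0 q.succ := by
  have h0 : (0 : Fin (m + 1)) ∉ I.image Fin.succ := by
    simp [Fin.succ_ne_zero, eq_comm]
  rw [resSum, Finset.sum_insert h0]
  have e1 : (insert (0 : Fin (m+1)) (I.image Fin.succ)).filter (fun q => 0 < q)
      = I.image Fin.succ := by
    rw [Finset.filter_insert]
    simp only [lt_irrefl, if_false]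
    apply Finset.filter_true_of_mem
    intro q hq
    rcases Finset.mem_image.1 hq with ⟨s, _, rfl⟩
    exact Fin.succ_pos s
  rw [e1, Finset.sum_image (fun a _ b _ h => Fin.succ_injective _ h)]
  have e2 : ∀ p ∈ I.image Fin.succ,
      (insert (0 : Fin (m+1)) (I.image Fin.succ)).filter (fun q => p < q)
        = (I.image Fin.succ).filter (fun q => p < q) := by
    intro p hp
    rcases Finset.mem_image.1 hp with ⟨s, _, rfl⟩
    rw [Finset.filter_insert]
    rw [if_neg (by simp)]
  rw [Finset.sum_congr rfl fun p hp => Finset.sum_congr (e2 p hp) fun q _ => rfl]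
  rw [← resSum, resSum_image]
  abel

end TResAux

open TResAux

/-- `[Ã_I] = [A_I]_{n-|I|} ∪ [A_{0I}]_{|I|-1}`: the convolution matrix `Ã_I` is
conjugate to a block-triangular matrix with `|I| - 1` diagonal blocks `A_{I∪{0}}`
and `n - |I|` diagonal blocks `A_I`. -/
theorem tRes_eigenvalues {m N : ℕ}
    (A : Fin (m + 1) → Fin (m + 1) → Matrix (Fin N) (Fin N) ℂ)
    (hsymm : ∀ i j, A i j = A j i)
    (h4 : ∀ i j k l : Fin (m + 1), i ≠ j → i ≠ k → i ≠ l → j ≠ k → j ≠ l → k ≠ l →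
      Commute (A i j) (A k l))
    (h3 : ∀ i j k : Fin (m + 1), i ≠ j → i ≠ k → j ≠ k →
      Commute (A i j) (A i k + A j k))
    (I : Finset (Fin m)) (hI : 2 ≤ I.card) :
    ∃ P : Matrix (Fin m × Fin N) (Fin m × Fin N) ℂ, IsUnit P ∧
      ∃ f : Fin m → Bool,
        (Finset.univ.filter fun k => f k = true).card = I.card - 1 ∧
        ∃ D : Matrix (Fin m × Fin N) (Fin m × Fin N) ℂ,
          P⁻¹ * tRes A I * P = D ∧
          Matrix.BlockTriangular D Prod.fst ∧
          ∀ (k : Fin m) (a b : Fin N),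
            D (k, a) (k, b) =
              (if f k then resSum A (insert 0 (I.image Fin.succ))
               else resSum A (I.image Fin.succ)) a b := by
  classical
  have hne : I.Nonempty := Finset.card_pos.1 (by omega)
  set t := I.min' hne with htdef
  have ht : t ∈ I := I.min'_mem hne
  have htle : ∀ y ∈ I, t ≤ y := fun y hy => I.min'_le y hy
  refine ⟨Pmat I t, ?_, ?_⟩
  · exact ⟨⟨Pmat I t, Qmat I t, Pmat_mul_Qmat I t, Qmat_mul_Pmat I t⟩, rfl⟩
  refine ⟨fun k => decide (k ∈ I ∧ k ≠ t), ?_, ?_⟩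
  · have : (Finset.univ.filter fun k => (decide (k ∈ I ∧ k ≠ t)) = true)
        = I.erase t := by
      ext k
      simp [Finset.mem_erase, and_comm]
    rw [this, Finset.card_erase_of_mem ht]
  refine ⟨blockOf (Dblk A I t), ?_, ?_, ?_⟩
  · have hPinv : (Pmat I t : Matrix (Fin m × Fin N) (Fin m × Fin N) ℂ)⁻¹ = Qmat I t :=
      Matrix.inv_eq_right_inv (Pmat_mul_Qmat I t)
    have hBP : tRes A I * Pmat I t = Pmat I t * blockOf (Dblk A I t) := by
      rw [tRes_eq, Pmat, blockOf_mul, blockOf_mul]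
      have : (fun x y => ∑ z, Bblk A I x z * (ps I t z y • (1 : Matrix (Fin N) (Fin N) ℂ)))
          = fun x y => ∑ z, (ps I t x z • (1 : Matrix (Fin N) (Fin N) ℂ)) * Dblk A I t z y := by
        funext x y
        have l1 : ∀ z, Bblk A I x z * (ps I t z y • (1 : Matrix (Fin N) (Fin N) ℂ))
            = ps I t z y • Bblk A I x z := by
          intro z; rw [Matrix.mul_smul, Matrix.mul_one]
        have l2 : ∀ z, (ps I t x z • (1 : Matrix (Fin N) (Fin N) ℂ)) * Dblk A I t z y
            = ps I t x z • Dblk A I t z y := by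
          intro z; rw [Matrix.smul_mul, Matrix.one_mul]
        simp only [l1, l2]
        rw [sum_ps_right I t (Bblk A I x) y, sum_ps_left I t (fun z => Dblk A I t z y) x]
        exact key_cases A I t ht x y
      rw [this]
    rw [hPinv, Matrix.mul_assoc, hBP, ← Matrix.mul_assoc, Qmat_mul_Pmat, Matrix.one_mul]
  · intro i j hij
    have hij' : j.1 < i.1 := hij
    have h1 : i.1 ≠ j.1 := ne_of_gt hij'
    have hD : Dblk A I t i.1 j.1 = 0 := by
      rw [Dblk, if_neg h1, if_neg ?_]
      rintro ⟨hti, hj⟩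
      exact absurd (htle _ hj) (not_le.2 (hti ▸ hij'))
    show blockOf (Dblk A I t) i j = 0
    rcases i with ⟨i1, i2⟩
    rcases j with ⟨j1, j2⟩
    simp [blockOf, hD]
  · intro k a b
    have : blockOf (Dblk A I t) (k, a) (k, b) = Dblk A I t k k a b := rfl
    rw [this, Dblk, if_pos rfl]
    by_cases hk : k ∈ I ∧ k ≠ t
    · rw [if_pos hk]
      simp only [hk.1, hk.2, decide_true]
      rw [if_pos (by simp [hk.1, hk.2]), resSum_insert_zero]
    · rw [if_neg hk]
      rw [if_neg (by simpa using hk), resSum_image]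
end
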